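/- arXiv:math/0310011 — 6 statements merged into one kernel-verified Lean document; each statement's English description precedes it below -/
import Mathlib

section
/- In the BMW algebra B of a simply laced Coxeter diagram, for adjacent nodes i and j one has g_j g_i e_j = e_i g_j g_i = e_i e_j. -/
noncomputable section

/-- The base field ℚ(l,x): rational functions in two variables over ℚ. -/
abbrev BMWField : Type := FractionRing (MvPolynomial (Fin 2) ℚ)

/-- The parameter `l`. -/
def lP : BMWField := algebraMap (MvPolynomial (Fin 2) ℚ) BMWField (MvPolynomial.X 0)

/-- The parameter `x`. -/
def xP : BMWField := algebraMap (MvPolynomial (Fin 2) ℚ) BMWField (MvPolynomial.X 1)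

/-- The parameter `m = (l - l⁻¹)/(1 - x)`. -/
def mP : BMWField := (lP - lP⁻¹) / (1 - xP)

/-- The free algebra on generators `g_i` (left summand) and `e_i` (right summand). -/
abbrev BMWFree (n : ℕ) : Type := FreeAlgebra BMWField (Fin n ⊕ Fin n)

/-- The generator `g_i` of the free algebra. -/
def Gf (n : ℕ) (i : Fin n) : BMWFree n := FreeAlgebra.ι BMWField (Sum.inl i)

/-- The generator `e_i` of the free algebra. -/
def Ef (n : ℕ) (i : Fin n) : BMWFree n := FreeAlgebra.ι BMWField (Sum.inr i)

/-- The defining relations (B1), (B2), (D1), (R1), (R2) of the BMW algebra of a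
simply laced diagram on `n` nodes with adjacency relation `adj`. -/
inductive BMWRel (n : ℕ) (adj : Fin n → Fin n → Prop) : BMWFree n → BMWFree n → Prop
  | comm (i j : Fin n) (hne : i ≠ j) (h : ¬ adj i j) :
      BMWRel n adj (Gf n i * Gf n j) (Gf n j * Gf n i)
  | braid (i j : Fin n) (h : adj i j) :
      BMWRel n adj (Gf n i * Gf n j * Gf n i) (Gf n j * Gf n i * Gf n j)
  | defE (i : Fin n) :
      BMWRel n adj (mP • Ef n i) (lP • (Gf n i * Gf n i + mP • Gf n i - 1))
  | ge (i : Fin n) :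
      BMWRel n adj (Gf n i * Ef n i) (lP⁻¹ • Ef n i)
  | ege (i j : Fin n) (h : adj i j) :
      BMWRel n adj (Ef n i * Gf n j * Ef n i) (lP • Ef n i)

/-- The BMW algebra of the diagram, over ℚ(l,x). -/
abbrev BMW (n : ℕ) (adj : Fin n → Fin n → Prop) : Type := RingQuot (BMWRel n adj)

/-- The generator `g_i` of the BMW algebra. -/
def gg (n : ℕ) (adj : Fin n → Fin n → Prop) (i : Fin n) : BMW n adj :=
  RingQuot.mkAlgHom BMWField (BMWRel n adj) (Gf n i)

/-- The generator `e_i` of the BMW algebra. -/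
def ee (n : ℕ) (adj : Fin n → Fin n → Prop) (i : Fin n) : BMW n adj :=
  RingQuot.mkAlgHom BMWField (BMWRel n adj) (Ef n i)

namespace BMWAux
open MvPolynomial

lemma map_ne {p : MvPolynomial (Fin 2) ℚ}
    (h : MvPolynomial.eval (fun i => if i = 0 then (2:ℚ) else 3) p ≠ 0) :
    algebraMap (MvPolynomial (Fin 2) ℚ) BMWField p ≠ 0 := by
  intro h0
  have hp : p = 0 := IsFractionRing.injective (MvPolynomial (Fin 2) ℚ) BMWField (by simpa using h0)
  rw [hp] at h; simp at h

lemma hl : lP ≠ 0 := map_ne (by simp)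

lemma hx1 : (1 : BMWField) - xP ≠ 0 := by
  have h : (1 : BMWField) - xP = algebraMap (MvPolynomial (Fin 2) ℚ) BMWField (1 - X 1) := by
    simp [xP]
  rw [h]; exact map_ne (by norm_num)

lemma hsq : lP * lP - 1 ≠ 0 := by
  have h : lP * lP - 1 = algebraMap (MvPolynomial (Fin 2) ℚ) BMWField (X 0 * X 0 - 1) := by
    simp [lP]
  rw [h]; exact map_ne (by norm_num)

lemma hl2 : lP - lP⁻¹ ≠ 0 := by
  intro h
  apply hsq
  have h2 : lP * (lP - lP⁻¹) = lP * lP - 1 := by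
    rw [mul_sub, mul_inv_cancel₀ hl]
  rw [← h2, h, mul_zero]

lemma hm : mP ≠ 0 := div_ne_zero hl2 hx1

lemma hkey : mP * (1 - xP) = lP - lP⁻¹ := div_mul_cancel₀ _ hx1

lemma hlx : lP * lP - xP ≠ 0 := by
  have h : lP * lP - xP = algebraMap (MvPolynomial (Fin 2) ℚ) BMWField (X 0 * X 0 - X 1) := by
    simp [lP, xP]
  rw [h]; exact map_ne (by norm_num)

lemma hlm : 1 + lP * mP ≠ 0 := by
  intro h
  apply hlx
  have h2 : lP * (mP * (1 - xP)) = lP * lP - 1 := by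
    rw [hkey, mul_sub, mul_inv_cancel₀ hl]
  have h3 : (1 + lP * mP) * (1 - xP) = lP * lP - xP := by ring_nf; ring_nf at h2; linear_combination h2
  rw [← h3, h, zero_mul]

section alg
variable {n : ℕ} {adj : Fin n → Fin n → Prop}
local notation "g" => gg n adj
local notation "e" => ee n adj

lemma rel_braid {i j : Fin n} (h : adj i j) :
    g i * g j * g i = g j * g i * g j := by
  simpa [gg, map_mul] using RingQuot.mkAlgHom_rel BMWField (BMWRel.braid i j h)

lemma rel_defE (i : Fin n) :
    mP • e i = lP • (g i * g i + mP • g i - 1) := by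
  simpa [gg, ee, map_mul, map_add, map_sub, map_smul, map_one] using
    RingQuot.mkAlgHom_rel BMWField (BMWRel.defE (adj := adj) i)

lemma rel_ge (i : Fin n) : g i * e i = lP⁻¹ • e i := by
  simpa [gg, ee, map_mul, map_smul] using
    RingQuot.mkAlgHom_rel BMWField (BMWRel.ge (adj := adj) i)

lemma rel_ege {i j : Fin n} (h : adj i j) :
    e i * g j * e i = lP • e i := by
  simpa [gg, ee, map_mul, map_smul] using RingQuot.mkAlgHom_rel BMWField (BMWRel.ege i j h)

lemma bsub (a b : BMW n adj) : a - b = a + (-1 : BMWField) • b := by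
  rw [sub_eq_add_neg a b, neg_one_smul BMWField b]

lemma smul_cancel {c : BMWField} (hc : c ≠ 0) {A B : BMW n adj} (h : c • A = c • B) : A = B := by
  calc A = c⁻¹ • (c • A) := (inv_smul_smul₀ hc A).symm
  _ = c⁻¹ • (c • B) := by rw [h]
  _ = B := inv_smul_smul₀ hc B

lemma rel_eg (i : Fin n) : e i * g i = lP⁻¹ • e i := by
  apply smul_cancel hm
  calc mP • (e i * g i) = (mP • e i) * g i := (smul_mul_assoc mP (e i) (g i)).symm
  _ = (lP • (g i * g i + mP • g i - 1)) * g i := by rw [rel_defE]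
  _ = g i * (lP • (g i * g i + mP • g i - 1)) := by
      simp only [bsub, smul_mul_assoc, mul_smul_comm, add_mul, mul_add, smul_add, smul_smul,
        one_mul, mul_one, mul_assoc]
  _ = g i * (mP • e i) := by rw [← rel_defE]
  _ = mP • (g i * e i) := mul_smul_comm mP (g i) (e i)
  _ = mP • (lP⁻¹ • e i) := by rw [rel_ge]

lemma eg2 (i : Fin n) : e i * (g i * g i) = (lP⁻¹ * lP⁻¹) • e i := by
  rw [← mul_assoc (e i) (g i) (g i), rel_eg i, smul_mul_assoc lP⁻¹ (e i) (g i), rel_eg i, smul_smul]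

lemma rel_ee (i : Fin n) : e i * e i = xP • e i := by
  apply smul_cancel hm
  calc mP • (e i * e i) = e i * (mP • e i) := (mul_smul_comm mP (e i) (e i)).symm
  _ = e i * (lP • (g i * g i + mP • g i - 1)) := by rw [rel_defE]
  _ = lP • (e i * (g i * g i)) + (lP * mP) • (e i * g i) + (lP * -1) • e i := by
      simp only [bsub, mul_add, mul_smul_comm, mul_one, smul_add, smul_smul]
  _ = lP • ((lP⁻¹ * lP⁻¹) • e i) + (lP * mP) • (lP⁻¹ • e i) + (lP * -1) • e i := by
      rw [eg2 i, rel_eg i]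
  _ = (lP * (lP⁻¹ * lP⁻¹)) • e i + (lP * mP * lP⁻¹) • e i + (lP * -1) • e i := by
      rw [smul_smul, smul_smul]
  _ = (lP * (lP⁻¹ * lP⁻¹) + lP * mP * lP⁻¹ + lP * -1) • e i := by
      rw [← add_smul, ← add_smul]
  _ = mP • (xP • e i) := by
      rw [smul_smul]
      have h3 : lP * lP⁻¹ = 1 := mul_inv_cancel₀ hl
      rw [show lP * (lP⁻¹ * lP⁻¹) + lP * mP * lP⁻¹ + lP * -1 = mP * xP from by
        linear_combination (lP⁻¹ + mP) * h3 + hkey]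

end alg
end BMWAux

section alg2
namespace BMWAux
variable {n : ℕ} {adj : Fin n → Fin n → Prop}
local notation "g" => gg n adj
local notation "e" => ee n adj

lemma P1 (i j : Fin n) (hadj : adj i j) :
    g j * g i * e j = e i * g j * g i := by
  have hB : g j * (g i * g j) = g i * (g j * g i) := by
    have h := rel_braid hadj
    simp only [mul_assoc] at h
    exact h.symm
  have hA : g j * (g i * (g j * g j)) = g i * (g i * (g j * g i)) := by
    calc g j * (g i * (g j * g j)) = (g j * (g i * g j)) * g j := by simp only [mul_assoc]
    _ = (g i * (g j * g i)) * g j := by rw [hB]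
    _ = g i * (g j * (g i * g j)) := by simp only [mul_assoc]
    _ = g i * (g i * (g j * g i)) := by rw [hB]
  apply smul_cancel hm
  calc mP • (g j * g i * e j) = g j * g i * (mP • e j) :=
        (mul_smul_comm mP (g j * g i) (e j)).symm
  _ = g j * g i * (lP • (g j * g j + mP • g j - 1)) := by rw [rel_defE]
  _ = lP • (g j * (g i * (g j * g j))) + (lP * mP) • (g j * (g i * g j))
        + (lP * -1) • (g j * g i) := by
      simp only [bsub, mul_add, mul_smul_comm, mul_one, smul_add, smul_smul, mul_assoc]
  _ = lP • (g i * (g i * (g j * g i))) + (lP * mP) • (g i * (g j * g i))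
        + (lP * -1) • (g j * g i) := by rw [hA, hB]
  _ = lP • ((g i * g i + mP • g i - 1) * (g j * g i)) := by
      simp only [bsub, add_mul, smul_mul_assoc, one_mul, smul_add, smul_smul, mul_assoc]
  _ = (lP • (g i * g i + mP • g i - 1)) * (g j * g i) := by rw [smul_mul_assoc]
  _ = (mP • e i) * (g j * g i) := by rw [← rel_defE]
  _ = mP • (e i * g j * g i) := by rw [smul_mul_assoc, mul_assoc]

lemma neg1_cancel (a : BMW n adj) : a + (-1 : BMWField) • (1 : BMW n adj) + 1 = a := by
  have h1 : (-1 : BMWField) • (1 : BMW n adj) + 1 = 0 := by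
    calc (-1 : BMWField) • (1 : BMW n adj) + 1
        = (-1 : BMWField) • (1 : BMW n adj) + (1 : BMWField) • (1 : BMW n adj) := by
          rw [one_smul]
    _ = ((-1 : BMWField) + 1) • (1 : BMW n adj) := (add_smul _ _ _).symm
    _ = 0 := by rw [show (-1 : BMWField) + 1 = 0 from by ring, zero_smul]
  calc a + (-1 : BMWField) • (1 : BMW n adj) + 1
      = a + ((-1 : BMWField) • (1 : BMW n adj) + 1) := add_assoc _ _ _
  _ = a + 0 := by rw [h1]
  _ = a := add_zero a

lemma defE2 (j : Fin n) : g j * g j + mP • g j = (lP⁻¹ * mP) • e j + 1 := by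
  have h : g j * g j + mP • g j - 1 = (lP⁻¹ * mP) • e j := by
    calc g j * g j + mP • g j - 1
        = lP⁻¹ • (lP • (g j * g j + mP • g j - 1)) := (inv_smul_smul₀ hl _).symm
    _ = lP⁻¹ • (mP • e j) := by rw [← rel_defE]
    _ = (lP⁻¹ * mP) • e j := smul_smul _ _ _
  rw [bsub] at h
  calc g j * g j + mP • g j
      = (g j * g j + mP • g j + (-1 : BMWField) • (1 : BMW n adj)) + 1 := (neg1_cancel _).symm
  _ = (lP⁻¹ * mP) • e j + 1 := by rw [h]

def uu (n : ℕ) (adj : Fin n → Fin n → Prop) (j : Fin n) : BMW n adj :=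
  gg n adj j + mP • 1 + (-mP) • ee n adj j

lemma L4a (j : Fin n) : g j * uu n adj j = 1 := by
  calc g j * uu n adj j = g j * g j + mP • (g j * 1) + (-mP) • (g j * e j) := by
          simp only [uu, mul_add, mul_smul_comm]
  _ = g j * g j + mP • g j + (-mP) • (lP⁻¹ • e j) := by rw [mul_one, rel_ge]
  _ = ((lP⁻¹ * mP) • e j + 1) + (-mP * lP⁻¹) • e j := by rw [defE2, smul_smul]
  _ = ((lP⁻¹ * mP) • e j + (-mP * lP⁻¹) • e j) + 1 := by abel
  _ = (lP⁻¹ * mP + -mP * lP⁻¹) • e j + 1 := by rw [← add_smul]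
  _ = 1 := by
      rw [show lP⁻¹ * mP + -mP * lP⁻¹ = (0 : BMWField) from by ring, zero_smul, zero_add]

lemma L5 (j : Fin n) : uu n adj j * e j = lP • e j := by
  calc uu n adj j * e j = g j * e j + mP • ((1 : BMW n adj) * e j) + (-mP) • (e j * e j) := by
          simp only [uu, add_mul, smul_mul_assoc]
  _ = lP⁻¹ • e j + mP • e j + (-mP) • (xP • e j) := by rw [rel_ge, one_mul, rel_ee]
  _ = lP⁻¹ • e j + mP • e j + (-mP * xP) • e j := by rw [smul_smul]
  _ = (lP⁻¹ + mP + -mP * xP) • e j := by rw [← add_smul, ← add_smul]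
  _ = lP • e j := by
      rw [show lP⁻¹ + mP + -mP * xP = lP from by linear_combination hkey]

lemma P3 (i j : Fin n) (hadj : adj i j) (hadj' : adj j i) :
    e i * e j * g i * g j = e i := by
  calc e i * e j * g i * g j = e i * (e j * g i * g j) := by simp only [mul_assoc]
  _ = e i * (g i * g j * e i) := by rw [← P1 j i hadj']
  _ = (e i * g i) * g j * e i := by simp only [mul_assoc]
  _ = (lP⁻¹ • e i) * g j * e i := by rw [rel_eg]
  _ = lP⁻¹ • (e i * g j * e i) := by rw [smul_mul_assoc, smul_mul_assoc]
  _ = lP⁻¹ • (lP • e i) := by rw [rel_ege hadj]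
  _ = e i := by rw [smul_smul, inv_mul_cancel₀ hl, one_smul]

lemma P4a (i j : Fin n) (hadj : adj i j) (hadj' : adj j i) :
    e i * e j * g i = e i * uu n adj j := by
  calc e i * e j * g i = e i * e j * g i * 1 := (mul_one _).symm
  _ = e i * e j * g i * (g j * uu n adj j) := by rw [← L4a j]
  _ = e i * e j * g i * g j * uu n adj j := by simp only [mul_assoc]
  _ = e i * uu n adj j := by rw [P3 i j hadj hadj']

lemma P4 (i j : Fin n) (hadj : adj i j) (hadj' : adj j i) :
    e i * e j = e i * uu n adj j * uu n adj i := by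
  calc e i * e j = e i * e j * 1 := (mul_one _).symm
  _ = e i * e j * (g i * uu n adj i) := by rw [← L4a i]
  _ = (e i * e j * g i) * uu n adj i := by simp only [mul_assoc]
  _ = (e i * uu n adj j) * uu n adj i := by rw [P4a i j hadj hadj']

lemma Q1 (i j : Fin n) : e i * uu n adj j = e i * g j + mP • e i + (-mP) • (e i * e j) := by
  simp only [uu, mul_add, mul_smul_comm, mul_one]

lemma Q2 (i j : Fin n) (hadj : adj i j) :
    e i * uu n adj j * e i = lP • e i + (mP * xP) • e i + (-mP) • (e i * e j * e i) := by
  calc e i * uu n adj j * e i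
      = (e i * g j + mP • e i + (-mP) • (e i * e j)) * e i := by rw [Q1]
  _ = e i * g j * e i + mP • (e i * e i) + (-mP) • (e i * e j * e i) := by
      simp only [add_mul, smul_mul_assoc]
  _ = lP • e i + mP • (xP • e i) + (-mP) • (e i * e j * e i) := by rw [rel_ege hadj, rel_ee]
  _ = lP • e i + (mP * xP) • e i + (-mP) • (e i * e j * e i) := by rw [smul_smul]

lemma P5 (i j : Fin n) (hadj : adj i j) (hadj' : adj j i) :
    e i * e j * e i = e i := by
  have h : e i * e j * e i = (lP * lP) • e i + (lP * (mP * xP)) • e i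
      + (lP * -mP) • (e i * e j * e i) := by
    calc e i * e j * e i = e i * uu n adj j * uu n adj i * e i := by rw [P4 i j hadj hadj']
    _ = e i * uu n adj j * (uu n adj i * e i) := by simp only [mul_assoc]
    _ = e i * uu n adj j * (lP • e i) := by rw [L5]
    _ = lP • (e i * uu n adj j * e i) := mul_smul_comm _ _ _
    _ = lP • (lP • e i + (mP * xP) • e i + (-mP) • (e i * e j * e i)) := by
        rw [Q2 i j hadj]
    _ = (lP * lP) • e i + (lP * (mP * xP)) • e i + (lP * -mP) • (e i * e j * e i) := by
        simp only [smul_add, smul_smul]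
  have h2 : (1 + lP * mP) • (e i * e j * e i) = ((lP * lP) + lP * (mP * xP)) • e i := by
    calc (1 + lP * mP) • (e i * e j * e i)
        = (1 : BMWField) • (e i * e j * e i) + (lP * mP) • (e i * e j * e i) := add_smul _ _ _
    _ = e i * e j * e i + (lP * mP) • (e i * e j * e i) := by rw [one_smul]
    _ = ((lP * lP) • e i + (lP * (mP * xP)) • e i + (lP * -mP) • (e i * e j * e i))
        + (lP * mP) • (e i * e j * e i) := by nth_rewrite 1 [h]; rfl
    _ = (lP * lP) • e i + (lP * (mP * xP)) • e i
        + ((lP * -mP) • (e i * e j * e i) + (lP * mP) • (e i * e j * e i)) := by abel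
    _ = (lP * lP) • e i + (lP * (mP * xP)) • e i
        + ((lP * -mP + lP * mP) • (e i * e j * e i)) := by
          rw [← add_smul (lP * -mP) (lP * mP) (e i * e j * e i)]
    _ = (lP * lP) • e i + (lP * (mP * xP)) • e i
        + ((0 : BMWField) • (e i * e j * e i)) := by
          rw [show lP * -mP + lP * mP = (0 : BMWField) from by ring]
    _ = ((lP * lP) + lP * (mP * xP)) • e i := by rw [zero_smul, add_zero, ← add_smul]
  have hs : (lP * lP) + lP * (mP * xP) = 1 + lP * mP := by
    have h3 : lP * lP⁻¹ = 1 := mul_inv_cancel₀ hl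
    linear_combination (-lP) * hkey + h3
  rw [hs] at h2
  exact smul_cancel hlm h2

lemma Q2' (i j : Fin n) (hadj : adj i j) (hadj' : adj j i) :
    e i * uu n adj j * e i = lP • e i + (mP * xP) • e i + (-mP) • e i := by
  rw [Q2 i j hadj, P5 i j hadj hadj']

lemma Q3 (i j : Fin n) (hadj : adj i j) (hadj' : adj j i) :
    e i * uu n adj j * g i
      = e i * g j * g i + (mP * lP⁻¹) • e i + (-mP) • (e i * uu n adj j) := by
  calc e i * uu n adj j * g i
      = (e i * g j + mP • e i + (-mP) • (e i * e j)) * g i := by rw [Q1]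
  _ = e i * g j * g i + mP • (e i * g i) + (-mP) • (e i * e j * g i) := by
      simp only [add_mul, smul_mul_assoc]
  _ = e i * g j * g i + mP • (lP⁻¹ • e i) + (-mP) • (e i * uu n adj j) := by
      rw [rel_eg, P4a i j hadj hadj']
  _ = e i * g j * g i + (mP * lP⁻¹) • e i + (-mP) • (e i * uu n adj j) := by rw [smul_smul]

lemma goal2 (i j : Fin n) (hadj : adj i j) (hadj' : adj j i) :
    e i * e j = e i * g j * g i := by
  calc e i * e j = e i * uu n adj j * uu n adj i := P4 i j hadj hadj'
  _ = e i * uu n adj j * (g i + mP • 1 + (-mP) • e i) := rfl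
  _ = e i * uu n adj j * g i + mP • (e i * uu n adj j) + (-mP) • (e i * uu n adj j * e i) := by
      simp only [mul_add, mul_smul_comm, mul_one]
  _ = (e i * g j * g i + (mP * lP⁻¹) • e i + (-mP) • (e i * uu n adj j))
      + mP • (e i * uu n adj j) + (-mP) • (e i * uu n adj j * e i) := by
      rw [Q3 i j hadj hadj']
  _ = e i * g j * g i + (mP * lP⁻¹) • e i
      + ((-mP) • (e i * uu n adj j) + mP • (e i * uu n adj j))
      + (-mP) • (e i * uu n adj j * e i) := by abel
  _ = e i * g j * g i + (mP * lP⁻¹) • e i + ((-mP + mP) • (e i * uu n adj j))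
      + (-mP) • (e i * uu n adj j * e i) := by rw [← add_smul]
  _ = e i * g j * g i + (mP * lP⁻¹) • e i + (-mP) • (e i * uu n adj j * e i) := by
      rw [show -mP + mP = (0 : BMWField) from by ring, zero_smul, add_zero]
  _ = e i * g j * g i + (mP * lP⁻¹) • e i
      + (-mP) • (lP • e i + (mP * xP) • e i + (-mP) • e i) := by
      rw [Q2' i j hadj hadj']
  _ = e i * g j * g i
      + (mP * lP⁻¹ + ((-mP * lP + -mP * (mP * xP)) + -mP * -mP)) • e i := by
      simp only [smul_add, smul_smul]
      rw [← add_smul, ← add_smul, add_assoc, ← add_smul]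
  _ = e i * g j * g i := by
      rw [show mP * lP⁻¹ + ((-mP * lP + -mP * (mP * xP)) + -mP * -mP) = (0 : BMWField) from by
        linear_combination mP * hkey, zero_smul, add_zero]

end BMWAux
end alg2


/-- For adjacent nodes `i ~ j`: `g_j g_i e_j = e_i g_j g_i = e_i e_j`. -/
theorem bmw_gge (n : ℕ) (adj : Fin n → Fin n → Prop)
    (hsym : ∀ i j, adj i j → adj j i) (hirr : ∀ i, ¬ adj i i)
    (i j : Fin n) (hadj : adj i j) :
    gg n adj j * gg n adj i * ee n adj j = ee n adj i * gg n adj j * gg n adj i ∧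
    ee n adj i * gg n adj j * gg n adj i = ee n adj i * ee n adj j :=
  ⟨BMWAux.P1 i j hadj, (BMWAux.goal2 i j hadj (hsym i j hadj)).symm⟩
end
end

section
/- In the BMW algebra B of a simply laced Coxeter diagram, for adjacent nodes i and j one has e_i e_j e_i = e_i. -/
noncomputable section

lemma lP_ne : lP ≠ 0 := by
  intro h
  have := IsFractionRing.to_map_eq_zero_iff.mp h
  exact MvPolynomial.X_ne_zero 0 this

lemma inj' : Function.Injective (algebraMap (MvPolynomial (Fin 2) ℚ) BMWField) :=
  IsFractionRing.injective _ _

lemma x1_ne : (1:BMWField) - xP ≠ 0 := by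
  rw [sub_ne_zero]
  intro h
  have h2 : algebraMap (MvPolynomial (Fin 2) ℚ) BMWField 1 = xP := by simpa using h
  have := inj' h2
  have := congrArg (MvPolynomial.eval (fun _ => (0:ℚ))) this
  simp at this

lemma lsq_ne_one : lP * lP ≠ 1 := by
  intro h
  have h2 : algebraMap (MvPolynomial (Fin 2) ℚ) BMWField (MvPolynomial.X 0 * MvPolynomial.X 0)
      = algebraMap (MvPolynomial (Fin 2) ℚ) BMWField 1 := by
    simpa [lP, map_mul] using h
  have := congrArg (MvPolynomial.eval (fun _ => (0:ℚ))) (inj' h2)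
  simp at this

lemma lsq_ne_x : lP * lP ≠ xP := by
  intro h
  have h2 : algebraMap (MvPolynomial (Fin 2) ℚ) BMWField (MvPolynomial.X 0 * MvPolynomial.X 0)
      = algebraMap (MvPolynomial (Fin 2) ℚ) BMWField (MvPolynomial.X 1) := by
    simpa [lP, xP, map_mul] using h
  have := congrArg (MvPolynomial.eval (fun i : Fin 2 => if i = 0 then (1:ℚ) else 0)) (inj' h2)
  simp at this

lemma lsub_ne : lP - lP⁻¹ ≠ 0 := by
  intro h
  apply lsq_ne_one
  field_simp [lP_ne] at h
  linear_combination h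

lemma mP_ne : mP ≠ 0 := div_ne_zero lsub_ne x1_ne

lemma hmx : mP * (1 - xP) = lP - lP⁻¹ := div_mul_cancel₀ _ x1_ne

lemma F3 : lP⁻¹ + mP - lP = mP * xP := by linear_combination hmx

lemma hlm_ne : (1:BMWField) + lP * mP ≠ 0 := by
  intro h
  apply lsq_ne_x
  have h2 : (1 + lP * mP) * (1 - xP) = lP * lP - xP := by
    have := hmx
    have hl := mul_inv_cancel₀ lP_ne
    linear_combination lP * this - hl
  rw [h, zero_mul] at h2
  linear_combination -h2


lemma scancel {K M : Type*} [Field K] [AddCommMonoid M] [Module K M] {c : K} (hc : c ≠ 0)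
    {a b : M} (h : c • a = c • b) : a = b := by
  have := congrArg (fun z => c⁻¹ • z) h
  simpa [inv_smul_smul₀ hc] using this

lemma bmw_generic {K A : Type*} [Field K] [Ring A] [Algebra K A]
    (l m x : K) (gi gj ei ej : A)
    (hl : l ≠ 0) (hm : m ≠ 0) (hlm : 1 + l * m ≠ 0)
    (hmx : m * (1 - x) = l - l⁻¹)
    (h1i : m • ei = l • (gi * gi + m • gi - 1))
    (h1j : m • ej = l • (gj * gj + m • gj - 1))
    (hb : gi * gj * gi = gj * gi * gj)
    (h2i : gi * ei = l⁻¹ • ei)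
    (h2j : gj * ej = l⁻¹ • ej)
    (h3 : ei * gj * ei = l • ei) :
    ei * ej * ei = ei := by
  have hinv : l * l⁻¹ = 1 := mul_inv_cancel₀ hl
  have hs : l⁻¹ + m - l = m * x := by linear_combination hmx
  -- e g = l⁻¹ e
  have heg : ∀ (g e : A), m • e = l • (g * g + m • g - 1) → g * e = l⁻¹ • e →
      e * g = l⁻¹ • e := by
    intro g e h1 h2
    apply scancel hm
    calc m • (e * g) = (m • e) * g := by rw [smul_mul_assoc]
      _ = (l • (g * g + m • g - 1)) * g := by rw [h1]
      _ = g * (l • (g * g + m • g - 1)) := by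
          simp only [smul_mul_assoc, mul_smul_comm, add_mul, mul_add, sub_mul, mul_sub,
            one_mul, mul_one, mul_assoc]
      _ = g * (m • e) := by rw [h1]
      _ = m • (g * e) := by rw [mul_smul_comm]
      _ = m • (l⁻¹ • e) := by rw [h2]
  have hegi : ei * gi = l⁻¹ • ei := heg gi ei h1i h2i
  have hegj : ej * gj = l⁻¹ • ej := heg gj ej h1j h2j
  -- e e = x e
  have heei : ei * ei = x • ei := by
    apply scancel hm
    calc m • (ei * ei) = (l • (gi * gi + m • gi - 1)) * ei := by rw [← smul_mul_assoc, h1i]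
      _ = l • (gi * (gi * ei) + m • (gi * ei) - ei) := by
          simp only [smul_mul_assoc, add_mul, sub_mul, one_mul, mul_assoc]
      _ = l • (l⁻¹ • (l⁻¹ • ei) + m • (l⁻¹ • ei) - ei) := by
          rw [h2i, mul_smul_comm, h2i]
      _ = m • (x • ei) := by
          match_scalars
          linear_combination hs + (l⁻¹ + m) * hinv
  -- e_i g_j g_i = g_j g_i e_j
  have hegg : ei * gj * gi = gj * gi * ej := by
    apply scancel hm
    have hb' : gi * (gj * gi) = gj * (gi * gj) := by simpa only [mul_assoc] using hb
    have hb2 : gi * (gi * (gj * gi)) = gj * (gi * (gj * gj)) := by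
      rw [hb']
      calc gi * (gj * (gi * gj)) = (gi * gj * gi) * gj := by simp only [mul_assoc]
        _ = (gj * gi * gj) * gj := by rw [hb]
        _ = gj * (gi * (gj * gj)) := by simp only [mul_assoc]
    have hL : m • (ei * gj * gi) = l • (gi * (gi * (gj * gi)) + m • (gi * (gj * gi)) - gj * gi) := by
      calc m • (ei * gj * gi) = ((m • ei) * gj) * gi := by simp only [smul_mul_assoc]
        _ = ((l • (gi * gi + m • gi - 1)) * gj) * gi := by rw [h1i]
        _ = _ := by
            simp only [smul_mul_assoc, add_mul, sub_mul, one_mul, mul_assoc]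
    have hR : m • (gj * gi * ej) = l • (gj * (gi * (gj * gj)) + m • (gj * (gi * gj)) - gj * gi) := by
      calc m • (gj * gi * ej) = gj * (gi * (m • ej)) := by simp only [mul_smul_comm, mul_assoc]
        _ = gj * (gi * (l • (gj * gj + m • gj - 1))) := by rw [h1j]
        _ = _ := by
            simp only [mul_smul_comm, mul_add, mul_sub, mul_one, mul_assoc]
    rw [hL, hR, hb2, hb']
  -- key : g_j (g_i (e_j e_i)) = e_i
  have hkey : gj * (gi * (ej * ei)) = ei := by
    have h7 := congrArg (· * ei) hegg
    simp only [mul_assoc] at h7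
    rw [h2i] at h7
    simp only [mul_smul_comm] at h7
    rw [show ei * (gj * ei) = l • ei from by rw [← mul_assoc]; exact h3] at h7
    rw [smul_smul, inv_mul_cancel₀ hl, one_smul] at h7
    exact h7.symm
  -- inverses
  set di : A := gi + m • (1 : A) - m • ei with hdi
  set dj : A := gj + m • (1 : A) - m • ej with hdj
  have hdg : ∀ (g e d : A), m • e = l • (g * g + m • g - 1) → e * g = l⁻¹ • e →
      d = g + m • (1 : A) - m • e → d * g = 1 := by
    intro g e d h1 h2 hd
    apply scancel hl
    have e1 : d * g = g * g + m • g - m • (e * g) := by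
      rw [hd]; simp only [add_mul, sub_mul, smul_mul_assoc, one_mul]
    rw [e1, h2]
    have e2 : l • (g * g + m • g - m • (l⁻¹ • e)) =
        l • (g * g + m • g - 1) - (l * (m * l⁻¹)) • e + l • (1 : A) := by module
    rw [e2, ← h1]
    have e3 : l * (m * l⁻¹) = m := by field_simp
    rw [e3]
    module
  have hdgi : di * gi = 1 := hdg gi ei di h1i hegi hdi
  have hdgj : dj * gj = 1 := hdg gj ej dj h1j hegj hdj
  -- e_i d_i = l e_i
  have hedi : ei * di = l • ei := by
    have e1 : ei * di = ei * gi + m • ei - m • (ei * ei) := by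
      rw [hdi]; simp only [mul_add, mul_sub, mul_smul_comm, mul_one]
    rw [e1, hegi, heei]
    match_scalars
    linear_combination hs
  -- e_j e_i = d_i (d_j e_i)
  have hed2 : di * (dj * ei) = ej * ei := by
    conv_lhs => rw [← hkey]
    rw [show dj * (gj * (gi * (ej * ei))) = (dj * gj) * (gi * (ej * ei)) from
      (mul_assoc _ _ _).symm, hdgj, one_mul]
    rw [show di * (gi * (ej * ei)) = (di * gi) * (ej * ei) from
      (mul_assoc _ _ _).symm, hdgi, one_mul]
  -- final computation
  have key2 : ei * (ej * ei) = l • (l • ei + m • (x • ei) - m • (ei * (ej * ei))) := by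
    calc ei * (ej * ei) = ei * (di * (dj * ei)) := by rw [hed2]
      _ = (ei * di) * (dj * ei) := (mul_assoc _ _ _).symm
      _ = l • (ei * (dj * ei)) := by rw [hedi, smul_mul_assoc]
      _ = l • (ei * (gj * ei) + m • (ei * ei) - m • (ei * (ej * ei))) := by
          rw [hdj]
          congr 1
          simp only [mul_add, mul_sub, add_mul, sub_mul, smul_mul_assoc, mul_smul_comm,
            mul_one, one_mul]
      _ = l • (l • ei + m • (x • ei) - m • (ei * (ej * ei))) := by
          rw [show ei * (gj * ei) = l • ei from by rw [← mul_assoc]; exact h3, heei]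
  have main : (1 + l * m) • (ei * (ej * ei)) = (1 + l * m) • ei := by
    calc (1 + l * m) • (ei * (ej * ei))
        = (ei * (ej * ei)) + (l * m) • (ei * (ej * ei)) := by module
      _ = (l • (l • ei + m • (x • ei) - m • (ei * (ej * ei)))) + (l * m) • (ei * (ej * ei)) := by
          nth_rewrite 1 [key2]; rfl
      _ = (l * l) • ei + (l * (m * x)) • ei := by module
      _ = (1 + l * m) • ei := by
          match_scalars
          linear_combination (-l) * hs + hinv
  have := scancel hlm main
  rw [← mul_assoc] at this
  exact this

variable {n : ℕ} {adj : Fin n → Fin n → Prop}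

lemma q_defE (i : Fin n) :
    mP • ee n adj i = lP • (gg n adj i * gg n adj i + mP • gg n adj i - 1) := by
  have := RingQuot.mkAlgHom_rel BMWField (BMWRel.defE (n := n) (adj := adj) i)
  simpa [gg, ee, map_smul, map_mul, map_add, map_sub, map_one] using this

lemma q_braid {i j : Fin n} (h : adj i j) :
    gg n adj i * gg n adj j * gg n adj i = gg n adj j * gg n adj i * gg n adj j := by
  have := RingQuot.mkAlgHom_rel BMWField (BMWRel.braid (n := n) (adj := adj) i j h)
  simpa [gg, map_mul] using this

lemma q_ge (i : Fin n) : gg n adj i * ee n adj i = lP⁻¹ • ee n adj i := by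
  have := RingQuot.mkAlgHom_rel BMWField (BMWRel.ge (n := n) (adj := adj) i)
  simpa [gg, ee, map_smul, map_mul] using this

lemma q_ege {i j : Fin n} (h : adj i j) :
    ee n adj i * gg n adj j * ee n adj i = lP • ee n adj i := by
  have := RingQuot.mkAlgHom_rel BMWField (BMWRel.ege (n := n) (adj := adj) i j h)
  simpa [gg, ee, map_smul, map_mul] using this

/-- For adjacent nodes `i ~ j`: `e_i e_j e_i = e_i`. -/
theorem bmw_eee (n : ℕ) (adj : Fin n → Fin n → Prop)
    (hsym : ∀ i j, adj i j → adj j i) (hirr : ∀ i, ¬ adj i i)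
    (i j : Fin n) (hadj : adj i j) :
    ee n adj i * ee n adj j * ee n adj i = ee n adj i := by
  exact bmw_generic lP mP xP (gg n adj i) (gg n adj j) (ee n adj i) (ee n adj j)
    lP_ne mP_ne hlm_ne hmx (q_defE i) (q_defE j) (q_braid hadj) (q_ge i) (q_ge j) (q_ege hadj)
end
end

section
/- In the BMW algebra B of a simply laced Coxeter diagram, for adjacent nodes i and j one has g_j e_i g_j = g_i^{-1} e_j g_i^{-1} = g_i e_j g_i + m(e_j g_i - e_i g_j + g_i e_j - g_j e_i) + m^2 (e_j - e_i). -/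
noncomputable section

/-!
Only the relations attached to the edge `{i, j}` enter. The crux is `e_i e_j = g_j g_i e_j`.
The braid relation and the quadratic relation defining `e_i` give `e_i g_j g_i = g_j g_i e_j`, hence
`l g_j g_i e_j = g_j g_i e_j g_i e_j = e_i g_j g_i² e_j`; expanding `g_i²` by the quadratic relation
turns this into `(l⁻¹ + m) (g_j g_i e_j - e_i e_j) = 0`, and `l⁻¹ + m ≠ 0` over `ℚ(l, x)`.
Then `g_i g_j e_i g_j g_i = g_i g_j e_i e_j = e_j e_i e_j = e_j`, which is the first equation;
the second is the expansion of `g_i⁻¹ e_j g_i⁻¹` with `g_i⁻¹ = g_i + m - m e_i`.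
-/

namespace BMW

variable {K A : Type*} [Field K] [Ring A] [Algebra K A] {l m : K}

structure IsNode (l m : K) (g e : A) : Prop where
  smul_e : m • e = l • (g * g + m • g - 1)
  g_mul_e : g * e = l⁻¹ • e

namespace IsNode

variable {g e : A} (h : IsNode l m g e)
include h

lemma e_mul_g (hm : m ≠ 0) : e * g = l⁻¹ • e := by
  refine smul_right_injective A hm ?_
  calc m • (e * g) = l • ((g * g + m • g - 1) * g) := by
        rw [← smul_mul_assoc, h.smul_e, smul_mul_assoc]
    _ = g * (l • (g * g + m • g - 1)) := by
        simp only [sub_mul, add_mul, mul_sub, mul_add, smul_mul_assoc, mul_smul_comm, one_mul,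
          mul_one, mul_assoc]
    _ = m • (l⁻¹ • e) := by rw [← h.smul_e, mul_smul_comm, h.g_mul_e]

lemma g_mul_g (hl : l ≠ 0) : g * g = (l⁻¹ * m) • e - m • g + 1 := by
  rw [mul_smul, h.smul_e, inv_smul_smul₀ hl]
  abel

lemma smul_e_mul_e (hl : l ≠ 0) : m • (e * e) = (l⁻¹ + m - l) • e := by
  rw [← smul_mul_assoc, h.smul_e]
  simp only [smul_mul_assoc, sub_mul, add_mul, mul_assoc, h.g_mul_e, mul_smul_comm, one_mul]
  match_scalars
  field_simp

lemma g_mul_inv (hl : l ≠ 0) : g * (g + m • 1 - m • e) = 1 := by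
  rw [mul_sub, mul_add, mul_smul_comm, mul_one, mul_smul_comm, h.g_mul_e, h.g_mul_g hl]
  module

lemma inv_mul_g (hl : l ≠ 0) (hm : m ≠ 0) : (g + m • 1 - m • e) * g = 1 := by
  rw [sub_mul, add_mul, smul_mul_assoc, one_mul, smul_mul_assoc, h.e_mul_g hm, h.g_mul_g hl]
  module

lemma inverse_eq (hl : l ≠ 0) (hm : m ≠ 0) : Ring.inverse g = g + m • 1 - m • e :=
  Ring.inverse_unit ⟨g, _, h.g_mul_inv hl, h.inv_mul_g hl hm⟩

end IsNode

structure IsEdge (l m : K) (gi gj ei ej : A) : Prop where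
  left : IsNode l m gi ei
  right : IsNode l m gj ej
  braid : gi * gj * gi = gj * gi * gj
  ege_left : ei * gj * ei = l • ei
  ege_right : ej * gi * ej = l • ej

namespace IsEdge

variable {gi gj ei ej : A} (h : IsEdge l m gi gj ei ej)
include h

lemma symm : IsEdge l m gj gi ej ei :=
  ⟨h.right, h.left, h.braid.symm, h.ege_right, h.ege_left⟩

lemma mul_self_mul_braid : gi * gi * gj * gi = gj * gi * gj * gj := by
  calc gi * gi * gj * gi = gi * (gi * gj * gi) := by simp only [mul_assoc]
    _ = gi * (gj * gi * gj) := by rw [h.braid]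
    _ = gi * gj * gi * gj := by simp only [mul_assoc]
    _ = gj * gi * gj * gj := by rw [h.braid]

lemma e_mul_g_mul_g (hm : m ≠ 0) : ei * gj * gi = gj * gi * ej := by
  refine smul_right_injective A hm ?_
  calc m • (ei * gj * gi) = l • ((gi * gi + m • gi - 1) * gj * gi) := by
        simp only [← smul_mul_assoc, h.left.smul_e]
    _ = gj * gi * (l • (gj * gj + m • gj - 1)) := by
        simp only [add_mul, sub_mul, mul_add, mul_sub, smul_mul_assoc, mul_smul_comm, one_mul,
          mul_one, ← mul_assoc, h.mul_self_mul_braid, h.braid]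
    _ = m • (gj * gi * ej) := by rw [← h.right.smul_e, mul_smul_comm]

section Nondegenerate

variable (hl : l ≠ 0) (hm : m ≠ 0) (hlm : l⁻¹ + m ≠ 0)
include hl hm hlm

lemma e_mul_e : ei * ej = gj * gi * ej := by
  have hz : ei * gj * gi * ej = gj * gi * ej * ej := by rw [h.e_mul_g_mul_g hm]
  have key : l • (gj * gi * ej) = m • (ei * ej) - m • (gj * gi * ej * ej) + l⁻¹ • (ei * ej) := by
    calc l • (gj * gi * ej) = gj * gi * ej * gi * ej := by
          rw [← mul_smul_comm, ← h.ege_right]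
          simp only [mul_assoc]
      _ = ei * gj * (gi * gi) * ej := by
          rw [← h.e_mul_g_mul_g hm]
          simp only [mul_assoc]
      _ = m • (ei * ej) - m • (gj * gi * ej * ej) + l⁻¹ • (ei * ej) := by
          rw [h.left.g_mul_g hl]
          simp only [mul_add, mul_sub, add_mul, sub_mul, mul_smul_comm, smul_mul_assoc, mul_one]
          rw [h.ege_left, hz, mul_assoc ei gj ej, h.right.g_mul_e, smul_mul_assoc, mul_smul_comm]
          match_scalars <;> field_simp
  have hzz : m • (gj * gi * ej * ej) = (l⁻¹ + m - l) • (gj * gi * ej) := by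
    rw [mul_assoc _ ej ej, ← mul_smul_comm, h.right.smul_e_mul_e hl, mul_smul_comm]
  refine smul_right_injective A hlm ?_
  linear_combination (norm := module) hzz - key

lemma e_mul_e_eq_e_mul_g_mul_g : ei * ej = ei * gj * gi :=
  (h.e_mul_e hl hm hlm).trans (h.e_mul_g_mul_g hm).symm

lemma e_mul_e_mul_e : ei * ej * ei = ei := by
  rw [h.e_mul_e_eq_e_mul_g_mul_g hl hm hlm, mul_assoc _ gi, h.left.g_mul_e, mul_smul_comm,
    h.ege_left, inv_smul_smul₀ hl]

lemma e_mul_e_mul_g : ei * ej * gi = ei * gj + m • ei - m • (ei * ej) := by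
  rw [h.e_mul_e_eq_e_mul_g_mul_g hl hm hlm, mul_assoc _ gi, h.left.g_mul_g hl]
  simp only [mul_add, mul_sub, mul_smul_comm, mul_one, h.ege_left]
  match_scalars <;> field_simp

lemma g_mul_e_mul_e : gi * ej * ei = gj * ei + m • ei - m • (ej * ei) := by
  rw [mul_assoc, h.symm.e_mul_e hl hm hlm, ← mul_assoc, ← mul_assoc, h.left.g_mul_g hl]
  simp only [add_mul, sub_mul, smul_mul_assoc, one_mul, h.ege_left]
  match_scalars <;> field_simp

lemma g_mul_g_mul_e_mul_g_mul_g : gi * gj * ei * gj * gi = ej := by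
  calc gi * gj * ei * gj * gi = gi * gj * (ei * gj * gi) := by simp only [mul_assoc]
    _ = gi * gj * ei * ej := by rw [← h.e_mul_e_eq_e_mul_g_mul_g hl hm hlm, ← mul_assoc]
    _ = ej := by rw [← h.symm.e_mul_e hl hm hlm, h.symm.e_mul_e_mul_e hl hm hlm]

lemma g_mul_e_mul_g_eq_inv_mul_e_mul_inv :
    gj * ei * gj = (gi + m • 1 - m • ei) * ej * (gi + m • 1 - m • ei) :=
  calc gj * ei * gj
      = ((gi + m • 1 - m • ei) * gi) * (gj * ei * gj) * (gi * (gi + m • 1 - m • ei)) := by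
        rw [h.left.inv_mul_g hl hm, h.left.g_mul_inv hl, one_mul, mul_one]
    _ = (gi + m • 1 - m • ei) * (gi * gj * ei * gj * gi) * (gi + m • 1 - m • ei) := by
        simp only [mul_assoc]
    _ = (gi + m • 1 - m • ei) * ej * (gi + m • 1 - m • ei) := by
        rw [h.g_mul_g_mul_e_mul_g_mul_g hl hm hlm]

lemma inv_mul_e_mul_inv : (gi + m • 1 - m • ei) * ej * (gi + m • 1 - m • ei)
    = gi * ej * gi + m • (ej * gi - ei * gj + gi * ej - gj * ei) + (m * m) • (ej - ei) := by
  simp only [add_mul, sub_mul, mul_add, mul_sub, smul_mul_assoc, mul_smul_comm, one_mul, mul_one]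
  rw [h.g_mul_e_mul_e hl hm hlm, h.e_mul_e_mul_g hl hm hlm, h.e_mul_e_mul_e hl hm hlm]
  module

end Nondegenerate

end IsEdge

lemma algebraMap_ne_zero_of_eval_ne_zero (p : MvPolynomial (Fin 2) ℚ) (v : Fin 2 → ℚ)
    (hp : MvPolynomial.eval v p ≠ 0) :
    algebraMap (MvPolynomial (Fin 2) ℚ) BMWField p ≠ 0 := by
  rw [Ne, map_eq_zero_iff _ (IsFractionRing.injective _ _)]
  rintro rfl
  simp at hp

lemma lP_ne_zero : lP ≠ 0 :=
  algebraMap_ne_zero_of_eval_ne_zero _ ![1, 0] (by simp)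

lemma one_sub_xP_ne_zero : 1 - xP ≠ 0 := by
  simpa [xP] using algebraMap_ne_zero_of_eval_ne_zero (1 - .X 1) 0 (by simp)

lemma lP_mul_lP_sub_one_ne_zero : lP * lP - 1 ≠ 0 := by
  simpa [lP] using algebraMap_ne_zero_of_eval_ne_zero (.X 0 * .X 0 - 1) ![2, 0] (by norm_num)

lemma lP_mul_lP_sub_xP_ne_zero : lP * lP - xP ≠ 0 := by
  simpa [lP, xP] using algebraMap_ne_zero_of_eval_ne_zero (.X 0 * .X 0 - .X 1) ![1, 0] (by simp)

lemma mP_mul_one_sub_xP : mP * (1 - xP) = lP - lP⁻¹ := div_mul_cancel₀ _ one_sub_xP_ne_zero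

lemma mP_ne_zero : mP ≠ 0 := by
  intro h
  apply lP_mul_lP_sub_one_ne_zero
  have := mP_mul_one_sub_xP
  rw [h] at this
  field_simp [lP_ne_zero] at this
  linear_combination -this

lemma lP_inv_add_mP_ne_zero : lP⁻¹ + mP ≠ 0 := by
  intro h
  apply lP_mul_lP_sub_xP_ne_zero
  have := mP_mul_one_sub_xP
  have hm : mP = -lP⁻¹ := by linear_combination h
  rw [hm] at this
  field_simp [lP_ne_zero] at this
  linear_combination -this

variable (n : ℕ) (adj : Fin n → Fin n → Prop)

lemma isNode_gg (i : Fin n) : IsNode lP mP (gg n adj i) (ee n adj i) where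
  smul_e := by
    simpa only [gg, ee, map_smul, map_mul, map_add, map_sub, map_one] using
      RingQuot.mkAlgHom_rel BMWField (BMWRel.defE (adj := adj) i)
  g_mul_e := by
    simpa only [gg, ee, map_smul, map_mul] using
      RingQuot.mkAlgHom_rel BMWField (BMWRel.ge (adj := adj) i)

lemma isEdge_gg {i j : Fin n} (hij : adj i j) (hji : adj j i) :
    IsEdge lP mP (gg n adj i) (gg n adj j) (ee n adj i) (ee n adj j) where
  left := isNode_gg n adj i
  right := isNode_gg n adj j
  braid := by
    simpa only [gg, map_mul] using RingQuot.mkAlgHom_rel BMWField (BMWRel.braid i j hij)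
  ege_left := by
    simpa only [gg, ee, map_smul, map_mul] using
      RingQuot.mkAlgHom_rel BMWField (BMWRel.ege i j hij)
  ege_right := by
    simpa only [gg, ee, map_smul, map_mul] using
      RingQuot.mkAlgHom_rel BMWField (BMWRel.ege j i hji)

end BMW

theorem bmw_geg_general (n : ℕ) (adj : Fin n → Fin n → Prop)
    (hsym : ∀ i j, adj i j → adj j i)
    (i j : Fin n) (hadj : adj i j) :
    gg n adj j * ee n adj i * gg n adj j
      = Ring.inverse (gg n adj i) * ee n adj j * Ring.inverse (gg n adj i) ∧
    Ring.inverse (gg n adj i) * ee n adj j * Ring.inverse (gg n adj i)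
      = gg n adj i * ee n adj j * gg n adj i
        + mP • (ee n adj j * gg n adj i - ee n adj i * gg n adj j
                 + gg n adj i * ee n adj j - gg n adj j * ee n adj i)
        + (mP * mP) • (ee n adj j - ee n adj i) := by
  have h := BMW.isEdge_gg n adj hadj (hsym i j hadj)
  have hl := BMW.lP_ne_zero
  have hm := BMW.mP_ne_zero
  have hlm := BMW.lP_inv_add_mP_ne_zero
  rw [h.left.inverse_eq hl hm]
  exact ⟨h.g_mul_e_mul_g_eq_inv_mul_e_mul_inv hl hm hlm, h.inv_mul_e_mul_inv hl hm hlm⟩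

/-- For adjacent nodes `i ~ j`:
`g_j e_i g_j = g_i⁻¹ e_j g_i⁻¹
  = g_i e_j g_i + m(e_j g_i - e_i g_j + g_i e_j - g_j e_i) + m²(e_j - e_i)`. -/
theorem bmw_geg (n : ℕ) (adj : Fin n → Fin n → Prop)
    (hsym : ∀ i j, adj i j → adj j i) (hirr : ∀ i, ¬ adj i i)
    (i j : Fin n) (hadj : adj i j) :
    gg n adj j * ee n adj i * gg n adj j
      = Ring.inverse (gg n adj i) * ee n adj j * Ring.inverse (gg n adj i) ∧
    Ring.inverse (gg n adj i) * ee n adj j * Ring.inverse (gg n adj i)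
      = gg n adj i * ee n adj j * gg n adj i
        + mP • (ee n adj j * gg n adj i - ee n adj i * gg n adj j
                 + gg n adj i * ee n adj j - gg n adj j * ee n adj i)
        + (mP * mP) • (ee n adj j - ee n adj i) :=
  bmw_geg_general n adj hsym i j hadj
end
end

section
/- Let W be a finite simply laced Weyl group of connected type. For any two nodes i, j of the Dynkin diagram, there is a unique element w_{ji} of minimal length in W such that w_{ji} r_j w_{ji}^{-1} = r_i, and it satisfies w_{ij}^{-1} = w_{ji}. -/
/-!
Every root `w (α k)` is a vector of squared length 2 in the even lattice spanned by the `α k`,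
whose Gram matrix has nonpositive off-diagonal entries; splitting such a vector into its positive
and negative parts shows that it is a nonnegative or a nonpositive combination of the `α k`.
From this, `ℓ (w s_γ) < ℓ w` whenever `w` sends a positive root `γ` to a negative one.

A conjugator `w` of minimal length from `r j` to `r i` therefore maps `α j` to `α i` and keeps
positive every positive root orthogonal to `α j`: otherwise `w s_γ` is a shorter conjugator, as
`s_γ` commutes with `r j`. For two minimal conjugators `w, w'`, the element `w⁻¹ w'` fixes `α j`
and preserves the positive roots orthogonal to `α j`; moving `α j` into the dominant chamber
(which uses that `W` is finite) shows that such an element is trivial. Since length is invariant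
under inversion, `w_{ji}⁻¹` is a minimal conjugator from `r i` to `r j`, hence equals `w_{ij}`.
-/

open scoped RealInnerProductSpace

namespace SimplyLacedWeyl

section WordLength

variable {G ι : Type*} [Group G]

noncomputable def wordLength (g : ι → G) (w : G) : ℕ :=
  sInf {k | ∃ ω : List ι, ω.length = k ∧ w = (ω.map g).prod}

variable {g : ι → G}

theorem wordLength_le {w : G} {ω : List ι} (h : w = (ω.map g).prod) :
    wordLength g w ≤ ω.length :=
  Nat.sInf_le ⟨ω, rfl, h⟩

theorem exists_reduced_word {w : G} (h : ∃ ω : List ι, w = (ω.map g).prod) :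
    ∃ ω : List ι, ω.length = wordLength g w ∧ w = (ω.map g).prod := by
  obtain ⟨ω, hω⟩ := h
  exact Nat.sInf_mem (s := {k | ∃ ω : List ι, ω.length = k ∧ w = (ω.map g).prod}) ⟨_, ω, rfl, hω⟩

theorem prod_map_mem_closure (ω : List ι) : (ω.map g).prod ∈ Subgroup.closure (Set.range g) := by
  induction ω with
  | nil => exact one_mem _
  | cons k ω ih => simpa using mul_mem (Subgroup.subset_closure (Set.mem_range_self k)) ih

variable (hg : ∀ k, g k * g k = 1)
include hg

theorem inv_prod_map_eq_prod_map_reverse (ω : List ι) :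
    (ω.map g).prod⁻¹ = (ω.reverse.map g).prod := by
  simp [List.prod_inv_reverse, Function.comp_def, inv_eq_of_mul_eq_one_left (hg _)]

theorem exists_word_of_mem_closure {w : G} (hw : w ∈ Subgroup.closure (Set.range g)) :
    ∃ ω : List ι, w = (ω.map g).prod := by
  induction hw using Subgroup.closure_induction with
  | mem _ hx =>
    obtain ⟨k, rfl⟩ := hx
    exact ⟨[k], by simp⟩
  | one => exact ⟨[], rfl⟩
  | mul _ _ _ _ hx hy =>
    obtain ⟨ω, rfl⟩ := hx
    obtain ⟨ω', rfl⟩ := hy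
    exact ⟨ω ++ ω', by simp⟩
  | inv _ _ hx =>
    obtain ⟨ω, rfl⟩ := hx
    exact ⟨ω.reverse, inv_prod_map_eq_prod_map_reverse hg ω⟩

theorem wordLength_inv {w : G} (hw : w ∈ Subgroup.closure (Set.range g)) :
    wordLength g w⁻¹ = wordLength g w := by
  have key : ∀ u ∈ Subgroup.closure (Set.range g), wordLength g u⁻¹ ≤ wordLength g u := by
    intro u hu
    obtain ⟨ω, hlen, rfl⟩ := exists_reduced_word (exists_word_of_mem_closure hg hu)
    rw [← hlen, ← List.length_reverse]
    exact wordLength_le (inv_prod_map_eq_prod_map_reverse hg ω)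
  exact le_antisymm (key w hw) (by simpa using key w⁻¹ (inv_mem hw))

theorem exists_wordLength_mul_lt {w : G} (hw : w ∈ Subgroup.closure (Set.range g))
    (hne : w ≠ 1) : ∃ t, wordLength g (w * g t) < wordLength g w := by
  obtain ⟨ω, hlen, hω⟩ := exists_reduced_word (exists_word_of_mem_closure hg hw)
  obtain rfl | ⟨ω, t, rfl⟩ := ω.eq_nil_or_concat
  · exact absurd hω hne
  refine ⟨t, (wordLength_le (ω := ω) ?_).trans_lt ?_⟩
  · simp [hω, mul_assoc, hg]
  · simp [← hlen]

end WordLength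

section MinConjugator

variable {G ι : Type*} [Group G] {g : ι → G}

def IsMinConjugator (g : ι → G) (i j : ι) (w : G) : Prop :=
  w ∈ Subgroup.closure (Set.range g) ∧ w * g j * w⁻¹ = g i ∧
    ∀ v ∈ Subgroup.closure (Set.range g), v * g j * v⁻¹ = g i → wordLength g w ≤ wordLength g v

theorem exists_isMinConjugator {i j : ι}
    (h : ∃ w ∈ Subgroup.closure (Set.range g), w * g j * w⁻¹ = g i) :
    ∃ w, IsMinConjugator g i j w := by
  let S := {w | w ∈ Subgroup.closure (Set.range g) ∧ w * g j * w⁻¹ = g i}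
  have hS : S.Nonempty := h
  obtain ⟨hw, hconj⟩ : Function.argminOn (wordLength g) S hS ∈ S := Function.argminOn_mem _ _ hS
  exact ⟨_, hw, hconj, fun v hv hvconj => Function.argminOn_le _ _ (show v ∈ S from ⟨hv, hvconj⟩)⟩

theorem IsMinConjugator.inv (hg : ∀ k, g k * g k = 1) {i j : ι} {w : G}
    (hw : IsMinConjugator g i j w) : IsMinConjugator g j i w⁻¹ := by
  obtain ⟨hmem, hconj, hmin⟩ := hw
  refine ⟨inv_mem hmem, by rw [← hconj]; group, fun v hv hvconj => ?_⟩
  rw [wordLength_inv hg hmem, ← wordLength_inv hg hv]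
  exact hmin v⁻¹ (inv_mem hv) (by rw [← hvconj]; group)

end MinConjugator

variable {E : Type*} [NormedAddCommGroup E] [InnerProductSpace ℝ E]

/-- This is the orthogonal reflection in `γ` only when `⟪γ, γ⟫ = 2`. -/
def IsReflectionIn (γ : E) (f : E ≃ₗ[ℝ] E) : Prop :=
  ∀ v, f v = v - ⟪γ, v⟫ • γ

namespace IsReflectionIn

variable {γ δ : E} {f f' : E ≃ₗ[ℝ] E}

theorem unique (hf : IsReflectionIn γ f) (hf' : IsReflectionIn γ f') : f = f' :=
  LinearEquiv.ext fun v => (hf v).trans (hf' v).symm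

theorem neg (hf : IsReflectionIn γ f) : IsReflectionIn (-γ) f := fun v => by
  rw [hf v, inner_neg_left, neg_smul_neg]

theorem apply_of_inner_eq_zero (hf : IsReflectionIn γ f) {v : E} (hv : ⟪γ, v⟫ = 0) :
    f v = v := by
  rw [hf v, hv, zero_smul, sub_zero]

theorem conj {w : E ≃ₗ[ℝ] E} (hf : IsReflectionIn γ f)
    (hw : ∀ u v, ⟪w u, w v⟫ = ⟪u, v⟫) : IsReflectionIn (w γ) (w * f * w⁻¹) := fun v => by
  have : ⟪w γ, v⟫ = ⟪γ, w⁻¹ v⟫ := by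
    simpa [LinearEquiv.mul_apply] using hw γ (w⁻¹ v)
  rw [LinearEquiv.mul_apply, LinearEquiv.mul_apply, hf, map_sub, map_smul, this,
    ← LinearEquiv.mul_apply, mul_inv_cancel, LinearEquiv.coe_one, id]

variable (hγ : ⟪γ, γ⟫ = 2)
include hγ

theorem apply_self (hf : IsReflectionIn γ f) : f γ = -γ := by
  rw [hf, hγ]; module

theorem mul_self (hf : IsReflectionIn γ f) : f * f = 1 := by
  refine LinearEquiv.ext fun v => ?_
  rw [LinearEquiv.mul_apply, hf (f v), hf v, inner_sub_right, real_inner_smul_right, hγ,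
    LinearEquiv.coe_one, id]
  module

theorem inner_map_map (hf : IsReflectionIn γ f) (u v : E) : ⟪f u, f v⟫ = ⟪u, v⟫ := by
  rw [hf, hf, inner_sub_left, inner_sub_right, inner_sub_right, real_inner_smul_left,
    real_inner_smul_left, real_inner_smul_right, real_inner_smul_right, hγ, real_inner_comm u γ]
  ring

theorem eq_or_eq_neg (hf : IsReflectionIn γ f) (hδ : ⟪δ, δ⟫ = 2) (hf' : IsReflectionIn δ f) :
    δ = γ ∨ δ = -γ := by
  have h2 : (2 : ℝ) • γ = ⟪δ, γ⟫ • δ := by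
    have := (hf.apply_self hγ).symm.trans (hf' γ)
    linear_combination (norm := module) -this
  have hγc : γ = (⟪δ, γ⟫ / 2) • δ := by
    rw [div_eq_inv_mul, ← smul_smul, ← h2, smul_smul]
    norm_num
  set c := ⟪δ, γ⟫ / 2
  have hc : c * c = 1 := by
    have := hγ
    rw [hγc, real_inner_smul_left, real_inner_smul_right, hδ] at this
    linarith
  rcases mul_self_eq_one_iff.mp hc with h | h
  · left; rw [hγc, h, one_smul]
  · right; rw [hγc, h, neg_one_smul, neg_neg]

end IsReflectionIn

section Roots

variable {ι : Type*} {α : ι → E} {r : ι → E ≃ₗ[ℝ] E}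

def roots (α : ι → E) (r : ι → E ≃ₗ[ℝ] E) : Set E :=
  {γ | ∃ w ∈ Subgroup.closure (Set.range r), ∃ k, γ = w (α k)}

theorem mem_roots (k : ι) : α k ∈ roots α r := ⟨1, one_mem _, k, rfl⟩

theorem map_mem_roots {w : E ≃ₗ[ℝ] E} (hw : w ∈ Subgroup.closure (Set.range r)) {γ : E}
    (hγ : γ ∈ roots α r) : w γ ∈ roots α r := by
  obtain ⟨u, hu, k, rfl⟩ := hγ
  exact ⟨w * u, mul_mem hw hu, k, rfl⟩

variable (hr : ∀ k, IsReflectionIn (α k) (r k)) (hnorm : ∀ k, ⟪α k, α k⟫ = 2)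
include hr hnorm

theorem inner_map_map_of_mem_closure {w : E ≃ₗ[ℝ] E} (hw : w ∈ Subgroup.closure (Set.range r))
    (u v : E) : ⟪w u, w v⟫ = ⟪u, v⟫ := by
  induction hw using Subgroup.closure_induction'' generalizing u v with
  | mem _ hx =>
    obtain ⟨k, rfl⟩ := hx
    exact (hr k).inner_map_map (hnorm k) u v
  | inv_mem _ hx =>
    obtain ⟨k, rfl⟩ := hx
    rw [inv_eq_of_mul_eq_one_left ((hr k).mul_self (hnorm k))]
    exact (hr k).inner_map_map (hnorm k) u v
  | one => rfl
  | mul _ _ _ _ hx hy => rw [LinearEquiv.mul_apply, LinearEquiv.mul_apply, hx, hy]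

theorem inner_self_of_mem_roots {γ : E} (hγ : γ ∈ roots α r) : ⟪γ, γ⟫ = 2 := by
  obtain ⟨w, hw, k, rfl⟩ := hγ
  rw [inner_map_map_of_mem_closure hr hnorm hw, hnorm]

theorem ne_zero_of_mem_roots {γ : E} (hγ : γ ∈ roots α r) : γ ≠ 0 := by
  rintro rfl
  simpa using inner_self_of_mem_roots hr hnorm hγ

theorem neg_mem_roots {γ : E} (hγ : γ ∈ roots α r) : -γ ∈ roots α r := by
  obtain ⟨w, hw, k, rfl⟩ := hγ
  refine ⟨w * r k, mul_mem hw (Subgroup.subset_closure ⟨k, rfl⟩), k, ?_⟩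
  rw [LinearEquiv.mul_apply, (hr k).apply_self (hnorm k), map_neg]

theorem exists_isReflectionIn_of_mem_roots {γ : E} (hγ : γ ∈ roots α r) :
    ∃ s ∈ Subgroup.closure (Set.range r), IsReflectionIn γ s := by
  obtain ⟨w, hw, k, rfl⟩ := hγ
  exact ⟨w * r k * w⁻¹, mul_mem (mul_mem hw (Subgroup.subset_closure ⟨k, rfl⟩)) (inv_mem hw),
    (hr k).conj (inner_map_map_of_mem_closure hr hnorm hw)⟩

end Roots

section Cone

variable {V ι : Type*} [AddCommGroup V] [Module ℝ V] [Fintype ι] {β : ι → V}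

theorem mem_hull_range_iff {v : V} : v ∈ PointedCone.hull ℝ (Set.range β) ↔
    ∃ c : ι → ℝ, (∀ k, 0 ≤ c k) ∧ ∑ k, c k • β k = v := by
  rw [Submodule.mem_span_range_iff_exists_fun]
  constructor
  · rintro ⟨c, rfl⟩
    exact ⟨fun k => c k, fun k => (c k).2, rfl⟩
  · rintro ⟨c, hc, rfl⟩
    exact ⟨fun k => ⟨c k, hc k⟩, rfl⟩

variable (hind : LinearIndependent ℝ β)
include hind

theorem exists_coeff_le_of_add_eq {u v : V} (hu : u ∈ PointedCone.hull ℝ (Set.range β))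
    (hv : v ∈ PointedCone.hull ℝ (Set.range β)) {e : ι → ℝ} (h : u + v = ∑ k, e k • β k) :
    ∃ a : ι → ℝ, (∀ k, 0 ≤ a k ∧ a k ≤ e k) ∧ u = ∑ k, a k • β k := by
  obtain ⟨a, ha, rfl⟩ := mem_hull_range_iff.mp hu
  obtain ⟨b, hb, rfl⟩ := mem_hull_range_iff.mp hv
  have hab : ∀ k, a k + b k - e k = 0 := Fintype.linearIndependent_iff.mp hind _ <| by
    simp only [sub_smul, add_smul, Finset.sum_sub_distrib, Finset.sum_add_distrib, h, sub_self]
  exact ⟨a, fun k => ⟨ha k, by linarith [hab k, hb k]⟩, rfl⟩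

theorem eq_zero_of_mem_hull_of_neg_mem_hull {u : V} (hu : u ∈ PointedCone.hull ℝ (Set.range β))
    (hnu : -u ∈ PointedCone.hull ℝ (Set.range β)) : u = 0 := by
  obtain ⟨a, ha, rfl⟩ := exists_coeff_le_of_add_eq hind hu hnu (e := 0) (by simp)
  simp [fun k => le_antisymm (ha k).2 (ha k).1]

theorem exists_eq_smul_of_add_eq_smul [DecidableEq ι] {u v : V}
    (hu : u ∈ PointedCone.hull ℝ (Set.range β)) (hv : v ∈ PointedCone.hull ℝ (Set.range β))
    {c : ℝ} {k : ι} (h : u + v = c • β k) : ∃ a : ℝ, 0 ≤ a ∧ u = a • β k := by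
  obtain ⟨a, ha, rfl⟩ := exists_coeff_le_of_add_eq hind hu hv (e := Pi.single k c)
    (by simp [Pi.single_apply, ite_smul, h])
  refine ⟨a k, (ha k).1, Finset.sum_eq_single k (fun l _ hl => ?_) (by simp)⟩
  have := ha l
  rw [Pi.single_eq_of_ne hl] at this
  rw [le_antisymm this.2 this.1, zero_smul]

end Cone

section Lattice

variable {ι : Type*} {α : ι → E}

theorem exists_int_inner_of_mem_span {x b : E} (hx : ∀ k, ∃ z : ℤ, ⟪x, α k⟫ = z)
    (hb : b ∈ Submodule.span ℤ (Set.range α)) : ∃ z : ℤ, ⟪x, b⟫ = z := by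
  induction hb using Submodule.span_induction with
  | mem _ h =>
    obtain ⟨k, rfl⟩ := h
    exact hx k
  | zero => exact ⟨0, by simp⟩
  | add _ _ _ _ h h' =>
    obtain ⟨m, hm⟩ := h
    obtain ⟨m', hm'⟩ := h'
    exact ⟨m + m', by rw [inner_add_right, hm, hm', Int.cast_add]⟩
  | smul z _ _ h =>
    obtain ⟨m, hm⟩ := h
    exact ⟨z * m, by rw [← Int.cast_smul_eq_zsmul ℝ, real_inner_smul_right, hm, Int.cast_mul]⟩

variable (hint : ∀ k l, ∃ z : ℤ, ⟪α k, α l⟫ = z)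
include hint

theorem exists_int_inner {a b : E} (ha : a ∈ Submodule.span ℤ (Set.range α))
    (hb : b ∈ Submodule.span ℤ (Set.range α)) : ∃ z : ℤ, ⟪a, b⟫ = z :=
  exists_int_inner_of_mem_span (fun l => by
    simpa only [real_inner_comm] using exists_int_inner_of_mem_span (hint l) ha) hb

variable (hnorm : ∀ k, ⟪α k, α k⟫ = 2)
include hnorm

theorem exists_inner_self_eq_two_mul {a : E} (ha : a ∈ Submodule.span ℤ (Set.range α)) :
    ∃ m : ℤ, ⟪a, a⟫ = 2 * m := by
  induction ha using Submodule.span_induction with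
  | mem _ h =>
    obtain ⟨k, rfl⟩ := h
    exact ⟨1, by rw [hnorm]; norm_num⟩
  | zero => exact ⟨0, by simp⟩
  | add a b ha hb h h' =>
    obtain ⟨m, hm⟩ := h
    obtain ⟨m', hm'⟩ := h'
    obtain ⟨z, hz⟩ := exists_int_inner hint ha hb
    exact ⟨m + z + m', by rw [real_inner_add_add_self, hm, hm', hz]; push_cast; ring⟩
  | smul z a _ h =>
    obtain ⟨m, hm⟩ := h
    refine ⟨z * z * m, ?_⟩
    rw [← Int.cast_smul_eq_zsmul ℝ, real_inner_smul_left, real_inner_smul_right, hm]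
    push_cast; ring

theorem two_le_inner_self {a : E} (ha : a ∈ Submodule.span ℤ (Set.range α)) (hne : a ≠ 0) :
    2 ≤ ⟪a, a⟫ := by
  obtain ⟨m, hm⟩ := exists_inner_self_eq_two_mul hint hnorm ha
  have hpos := real_inner_self_pos.mpr hne
  rw [hm] at hpos ⊢
  have hm0 : (0 : ℤ) < m := by exact_mod_cast (by linarith : (0 : ℝ) < m)
  have hm1 : (1 : ℝ) ≤ m := by exact_mod_cast (by omega : (1 : ℤ) ≤ m)
  linarith

theorem mem_hull_or_neg_mem_hull [Fintype ι] (hle : ∀ k l, k ≠ l → ⟪α k, α l⟫ ≤ 0) {γ : E}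
    (hγ : γ ∈ Submodule.span ℤ (Set.range α)) (hγ2 : ⟪γ, γ⟫ = 2) :
    γ ∈ PointedCone.hull ℝ (Set.range α) ∨ -γ ∈ PointedCone.hull ℝ (Set.range α) := by
  -- Write `γ = p - q` with `p, q` the positive and negative parts; then `⟪p, q⟫ ≤ 0`, so if
  -- both were nonzero, evenness would give `⟪γ, γ⟫ ≥ ⟪p, p⟫ + ⟪q, q⟫ ≥ 4`.
  obtain ⟨c, rfl⟩ := (Submodule.mem_span_range_iff_exists_fun ℤ).mp hγ
  set p := ∑ k, (c k).toNat • α k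
  set q := ∑ k, (-c k).toNat • α k
  have hpq : ∑ k, c k • α k = p - q := by
    rw [← Finset.sum_sub_distrib]
    refine Finset.sum_congr rfl fun k _ => ?_
    rw [← natCast_zsmul, ← natCast_zsmul, ← sub_smul, Int.toNat_sub_toNat_neg]
  have hp_inner_q : ⟪p, q⟫ ≤ 0 := by
    simp only [p, q, sum_inner, inner_sum, ← Nat.cast_smul_eq_nsmul ℝ, real_inner_smul_left,
      real_inner_smul_right]
    refine Finset.sum_nonpos fun k _ => Finset.sum_nonpos fun l _ => ?_
    obtain rfl | hkl := eq_or_ne k l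
    · rcases (by omega : (c k).toNat = 0 ∨ (-c k).toNat = 0) with h | h <;> simp [h]
    · exact mul_nonpos_of_nonneg_of_nonpos (by positivity)
        (mul_nonpos_of_nonneg_of_nonpos (by positivity) (hle l k hkl.symm))
  have hp_span : p ∈ Submodule.span ℤ (Set.range α) :=
    sum_mem fun k _ => nsmul_mem (Submodule.subset_span (Set.mem_range_self k)) _
  have hq_span : q ∈ Submodule.span ℤ (Set.range α) :=
    sum_mem fun k _ => nsmul_mem (Submodule.subset_span (Set.mem_range_self k)) _
  have hp_hull : p ∈ PointedCone.hull ℝ (Set.range α) :=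
    sum_mem fun k _ => nsmul_mem (PointedCone.subset_hull (Set.mem_range_self k)) _
  have hq_hull : q ∈ PointedCone.hull ℝ (Set.range α) :=
    sum_mem fun k _ => nsmul_mem (PointedCone.subset_hull (Set.mem_range_self k)) _
  rw [hpq] at hγ2 ⊢
  rw [real_inner_sub_sub_self] at hγ2
  by_cases hp : p = 0
  · right
    simpa [hp] using hq_hull
  by_cases hq : q = 0
  · left
    simpa [hq] using hp_hull
  have := two_le_inner_self hint hnorm hp_span hp
  have := two_le_inner_self hint hnorm hq_span hq
  linarith

end Lattice


section RootSystem

variable {ι : Type*} {α : ι → E} {r : ι → E ≃ₗ[ℝ] E}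
  (hr : ∀ k, IsReflectionIn (α k) (r k)) (hnorm : ∀ k, ⟪α k, α k⟫ = 2)
  (hcartan : ∀ k l, k ≠ l → ⟪α k, α l⟫ = 0 ∨ ⟪α k, α l⟫ = -1)

include hnorm hcartan in
theorem exists_int_inner_of_cartan (k l : ι) : ∃ z : ℤ, ⟪α k, α l⟫ = z := by
  obtain rfl | hkl := eq_or_ne k l
  · exact ⟨2, by rw [hnorm]; norm_num⟩
  · rcases hcartan k l hkl with h | h
    · exact ⟨0, by rw [h]; norm_num⟩
    · exact ⟨-1, by rw [h]; norm_num⟩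

include hr hnorm in
theorem map_mem_span_of_mem_closure (hint : ∀ k l, ∃ z : ℤ, ⟪α k, α l⟫ = z)
    {w : E ≃ₗ[ℝ] E} (hw : w ∈ Subgroup.closure (Set.range r)) {v : E}
    (hv : v ∈ Submodule.span ℤ (Set.range α)) : w v ∈ Submodule.span ℤ (Set.range α) := by
  have hgen : ∀ k, ∀ v ∈ Submodule.span ℤ (Set.range α), r k v ∈ Submodule.span ℤ (Set.range α) :=
      fun k v hv => by
    obtain ⟨z, hz⟩ := exists_int_inner_of_mem_span (hint k) hv
    rw [hr k, hz, Int.cast_smul_eq_zsmul]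
    exact sub_mem hv (zsmul_mem (Submodule.subset_span (Set.mem_range_self k)) z)
  induction hw using Subgroup.closure_induction'' generalizing v with
  | mem _ hx =>
    obtain ⟨k, rfl⟩ := hx
    exact hgen k v hv
  | inv_mem _ hx =>
    obtain ⟨k, rfl⟩ := hx
    rw [inv_eq_of_mul_eq_one_left ((hr k).mul_self (hnorm k))]
    exact hgen k v hv
  | one => exact hv
  | mul _ _ _ _ hx hy => exact hx (hy hv)
variable [Fintype ι]
include hr hnorm hcartan

theorem mem_hull_or_neg_mem_hull_of_mem_roots {γ : E} (hγ : γ ∈ roots α r) :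
    γ ∈ PointedCone.hull ℝ (Set.range α) ∨ -γ ∈ PointedCone.hull ℝ (Set.range α) := by
  have hint := exists_int_inner_of_cartan hnorm hcartan
  have hle : ∀ k l, k ≠ l → ⟪α k, α l⟫ ≤ 0 := fun k l hkl => by
    rcases hcartan k l hkl with h | h <;> norm_num [h]
  obtain ⟨w, hw, k, rfl⟩ := hγ
  exact mem_hull_or_neg_mem_hull hint hnorm hle
    (map_mem_span_of_mem_closure hr hnorm hint hw (Submodule.subset_span (Set.mem_range_self k)))
    (inner_self_of_mem_roots hr hnorm ⟨w, hw, k, rfl⟩)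

variable (hind : LinearIndependent ℝ α)
include hind

theorem reflection_apply_mem_hull {γ : E} (hγ : γ ∈ roots α r)
    (hpos : γ ∈ PointedCone.hull ℝ (Set.range α)) {k : ι} (hne : γ ≠ α k) :
    r k γ ∈ PointedCone.hull ℝ (Set.range α) := by
  classical
  refine (mem_hull_or_neg_mem_hull_of_mem_roots hr hnorm hcartan
    (map_mem_roots (Subgroup.subset_closure (Set.mem_range_self k)) hγ)).resolve_right
    fun hneg => hne ?_
  have hsum : γ + -(r k γ) = ⟪α k, γ⟫ • α k := by
    rw [hr k]
    abel
  obtain ⟨a, ha, rfl⟩ := exists_eq_smul_of_add_eq_smul hind hpos hneg hsum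
  have h2 := inner_self_of_mem_roots hr hnorm hγ
  rw [real_inner_smul_left, real_inner_smul_right, hnorm] at h2
  rw [show a = 1 by nlinarith, one_smul]

theorem exists_shorter_word_of_neg_mem_hull {γ : E} (hγ : γ ∈ roots α r)
    (hpos : γ ∈ PointedCone.hull ℝ (Set.range α)) {f : E ≃ₗ[ℝ] E} (hf : IsReflectionIn γ f)
    (ω : List ι) (hneg : -((ω.map r).prod γ) ∈ PointedCone.hull ℝ (Set.range α)) :
    ∃ ω' : List ι, ω'.length + 1 = ω.length ∧ (ω.map r).prod * f = (ω'.map r).prod := by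
  -- Reading the word from the right, the letter `r a` at which the image of `γ` becomes negative
  -- is applied to a positive root, which must be `α a` by `reflection_apply_mem_hull`; this
  -- letter then cancels against `f`.
  induction ω with
  | nil =>
    have := eq_zero_of_mem_hull_of_neg_mem_hull hind hpos (by simpa using hneg)
    exact absurd this (ne_zero_of_mem_roots hr hnorm hγ)
  | cons a ω ih =>
    have hu := prod_map_mem_closure (g := r) ω
    rcases mem_hull_or_neg_mem_hull_of_mem_roots hr hnorm hcartan (map_mem_roots hu hγ)
      with hp | hn
    · have hua : (ω.map r).prod γ = α a := by
        by_contra h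
        have := reflection_apply_mem_hull hr hnorm hcartan hind (map_mem_roots hu hγ) hp h
        exact ne_zero_of_mem_roots hr hnorm (map_mem_roots (prod_map_mem_closure (a :: ω)) hγ)
          (eq_zero_of_mem_hull_of_neg_mem_hull hind this (by simpa using hneg))
      have hf' : f = (ω.map r).prod⁻¹ * r a * (ω.map r).prod := by
        have := (hr a).conj (inner_map_map_of_mem_closure hr hnorm (inv_mem hu))
        rw [← hua, ← LinearEquiv.mul_apply, inv_mul_cancel, LinearEquiv.coe_one, id, inv_inv]
          at this
        exact hf.unique this
      refine ⟨ω, rfl, ?_⟩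
      rw [List.map_cons, List.prod_cons, hf', mul_assoc, mul_assoc, mul_inv_cancel_left,
        ← mul_assoc, (hr a).mul_self (hnorm a), one_mul]
    · obtain ⟨ω', hlen, hω'⟩ := ih hn
      exact ⟨a :: ω', by simp [hlen], by simp [mul_assoc, hω']⟩

theorem wordLength_mul_lt_of_neg_mem_hull {w : E ≃ₗ[ℝ] E}
    (hw : w ∈ Subgroup.closure (Set.range r)) {γ : E} (hγ : γ ∈ roots α r)
    (hpos : γ ∈ PointedCone.hull ℝ (Set.range α)) {f : E ≃ₗ[ℝ] E} (hf : IsReflectionIn γ f)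
    (hneg : -(w γ) ∈ PointedCone.hull ℝ (Set.range α)) :
    wordLength r (w * f) < wordLength r w := by
  obtain ⟨ω, hlen, rfl⟩ := exists_reduced_word
    (exists_word_of_mem_closure (fun k => (hr k).mul_self (hnorm k)) hw)
  obtain ⟨ω', hlen', hω'⟩ :=
    exists_shorter_word_of_neg_mem_hull hr hnorm hcartan hind hγ hpos hf ω hneg
  rw [hω']
  exact (wordLength_le rfl).trans_lt (by omega)

theorem mem_hull_of_wordLength_le_mul {w : E ≃ₗ[ℝ] E} (hw : w ∈ Subgroup.closure (Set.range r))
    {k : ι} (h : wordLength r w ≤ wordLength r (w * r k)) :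
    w (α k) ∈ PointedCone.hull ℝ (Set.range α) :=
  (mem_hull_or_neg_mem_hull_of_mem_roots hr hnorm hcartan
    (map_mem_roots hw (mem_roots k))).resolve_right fun hneg =>
      (wordLength_mul_lt_of_neg_mem_hull hr hnorm hcartan hind hw (mem_roots k)
        (PointedCone.subset_hull (Set.mem_range_self k)) (hr k) hneg).not_ge h

theorem neg_mem_hull_of_wordLength_mul_lt {w : E ≃ₗ[ℝ] E}
    (hw : w ∈ Subgroup.closure (Set.range r)) {k : ι}
    (h : wordLength r (w * r k) < wordLength r w) :
    -(w (α k)) ∈ PointedCone.hull ℝ (Set.range α) := by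
  refine (mem_hull_or_neg_mem_hull_of_mem_roots hr hnorm hcartan
    (map_mem_roots hw (mem_roots k))).resolve_left fun hpos => ?_
  have hwk := mul_mem hw (Subgroup.subset_closure (Set.mem_range_self k))
  have := wordLength_mul_lt_of_neg_mem_hull hr hnorm hcartan hind hwk (mem_roots k)
    (PointedCone.subset_hull (Set.mem_range_self k)) (hr k)
    (by rwa [LinearEquiv.mul_apply, (hr k).apply_self (hnorm k), map_neg, neg_neg])
  rw [mul_assoc, (hr k).mul_self (hnorm k), mul_one] at this
  exact this.not_gt h

theorem exists_neg_mem_hull_of_ne_one {w : E ≃ₗ[ℝ] E} (hw : w ∈ Subgroup.closure (Set.range r))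
    (hne : w ≠ 1) : ∃ k, -(w (α k)) ∈ PointedCone.hull ℝ (Set.range α) :=
  let ⟨k, hk⟩ := exists_wordLength_mul_lt (fun k => (hr k).mul_self (hnorm k)) hw hne
  ⟨k, neg_mem_hull_of_wordLength_mul_lt hr hnorm hcartan hind hw hk⟩

end RootSystem
section Dominance

variable {ι : Type*} [Fintype ι] {β : ι → E}

theorem exists_inner_eq_one (hind : LinearIndependent ℝ β) : ∃ ρ : E, ∀ k, ⟪β k, ρ⟫ = 1 := by
  let b := Module.Basis.span hind
  have := FiniteDimensional.span_of_finite ℝ (Set.finite_range β)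
  let φ : StrongDual ℝ (Submodule.span ℝ (Set.range β)) :=
    LinearMap.toContinuousLinearMap b.sumCoords
  refine ⟨((InnerProductSpace.toDual ℝ (Submodule.span ℝ (Set.range β))).symm φ : E),
    fun k => ?_⟩
  have hbk : ((b k : Submodule.span ℝ (Set.range β)) : E) = β k := by simp [b]
  rw [real_inner_comm, ← hbk, ← Submodule.coe_inner, InnerProductSpace.toDual_symm_apply]
  simp [φ]

theorem inner_nonneg_of_mem_hull {x v : E} (hx : ∀ k, 0 ≤ ⟪β k, x⟫)
    (hv : v ∈ PointedCone.hull ℝ (Set.range β)) : 0 ≤ ⟪v, x⟫ := by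
  obtain ⟨c, hc, rfl⟩ := mem_hull_range_iff.mp hv
  rw [sum_inner]
  exact Finset.sum_nonneg fun k _ => by
    rw [real_inner_smul_left]
    exact mul_nonneg (hc k) (hx k)

theorem map_mem_of_mem_hull_of_inner_nonpos {F : Type*} [AddCommGroup F] [Module ℝ F]
    {C : PointedCone ℝ F} (q : E →ₗ[ℝ] F) {x v : E} (hx : ∀ k, 0 ≤ ⟪β k, x⟫)
    (hq : ∀ k, ⟪β k, x⟫ = 0 → q (β k) ∈ C) (hv : v ∈ PointedCone.hull ℝ (Set.range β))
    (hvx : ⟪v, x⟫ ≤ 0) : q v ∈ C := by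
  obtain ⟨c, hc, rfl⟩ := mem_hull_range_iff.mp hv
  have hterms := (Finset.sum_eq_zero_iff_of_nonneg fun k _ => mul_nonneg (hc k) (hx k)).mp
    (le_antisymm (by simpa [sum_inner, real_inner_smul_left] using hvx)
      (Finset.sum_nonneg fun k _ => mul_nonneg (hc k) (hx k)))
  rw [map_sum]
  refine sum_mem fun k _ => ?_
  rw [map_smul]
  rcases mul_eq_zero.mp (hterms k (Finset.mem_univ k)) with h | h
  · simp [h]
  · exact C.smul_mem (hc k) (hq k h)

variable {α : ι → E} {r : ι → E ≃ₗ[ℝ] E} (hr : ∀ k, IsReflectionIn (α k) (r k))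
  (hnorm : ∀ k, ⟪α k, α k⟫ = 2) (hcartan : ∀ k l, k ≠ l → ⟪α k, α l⟫ = 0 ∨ ⟪α k, α l⟫ = -1)
  (hind : LinearIndependent ℝ α) [Finite (Subgroup.closure (Set.range r))]

include hr hind in
theorem exists_dominant (x : E) :
    ∃ w ∈ Subgroup.closure (Set.range r), ∀ k, 0 ≤ ⟪α k, w x⟫ := by
  obtain ⟨ρ, hρ⟩ := exists_inner_eq_one hind
  have : Nonempty (Subgroup.closure (Set.range r)) := ⟨1⟩
  obtain ⟨w, hw⟩ := Finite.exists_max fun w : Subgroup.closure (Set.range r) => ⟪w.1 x, ρ⟫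
  refine ⟨w, w.2, fun k => ?_⟩
  have := hw ⟨r k * w, mul_mem (Subgroup.subset_closure (Set.mem_range_self k)) w.2⟩
  rw [LinearEquiv.mul_apply, hr k, inner_sub_left, real_inner_smul_left, hρ] at this
  linarith

include hr hnorm hcartan hind in
theorem exists_inv_apply_dominant_and_map_mem_hull (x : E) :
    ∃ q ∈ Subgroup.closure (Set.range r), (∀ k, 0 ≤ ⟪α k, q⁻¹ x⟫) ∧
      ∀ l, ⟪α l, q⁻¹ x⟫ = 0 → q (α l) ∈ PointedCone.hull ℝ (Set.range α) := by
  -- Take `q` of minimal length with `q⁻¹ x` dominant: when `⟪α l, q⁻¹ x⟫ = 0`, `q * r l` has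
  -- the same property, so it is not shorter than `q`.
  let S := {q | q ∈ Subgroup.closure (Set.range r) ∧ ∀ k, 0 ≤ ⟪α k, q⁻¹ x⟫}
  have hS : S.Nonempty := by
    obtain ⟨w, hw, hdom⟩ := exists_dominant hr hind x
    exact ⟨w⁻¹, inv_mem hw, by simpa using hdom⟩
  set q := Function.argminOn (wordLength r) S hS
  obtain ⟨hq, hdom⟩ : q ∈ S := Function.argminOn_mem _ _ hS
  refine ⟨q, hq, hdom, fun l hl => mem_hull_of_wordLength_le_mul hr hnorm hcartan hind hq
    (Function.argminOn_le _ _ (a := q * r l)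
      (show q * r l ∈ S from ⟨mul_mem hq (Subgroup.subset_closure (Set.mem_range_self l)), ?_⟩))⟩
  have : (q * r l)⁻¹ x = q⁻¹ x := by
    rw [mul_inv_rev, inv_eq_of_mul_eq_one_left ((hr l).mul_self (hnorm l)),
      LinearEquiv.mul_apply, (hr l).apply_of_inner_eq_zero hl]
  rwa [this]

include hr hnorm hcartan hind in
theorem eq_one_of_apply_eq_self_of_map_mem_hull {j : ι} {h : E ≃ₗ[ℝ] E}
    (hh : h ∈ Subgroup.closure (Set.range r)) (hfix : h (α j) = α j)
    (hpos : ∀ γ ∈ roots α r, γ ∈ PointedCone.hull ℝ (Set.range α) → ⟪γ, α j⟫ = 0 →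
      h γ ∈ PointedCone.hull ℝ (Set.range α)) : h = 1 := by
  -- `h' = q⁻¹ * h * q` fixes the dominant vector `x = q⁻¹ (α j)`. If `h' ≠ 1`, it makes some
  -- `α t` negative; then `α t` is orthogonal to `x`, and `q (α t)` is a positive root
  -- orthogonal to `α j` that `h` makes negative.
  obtain ⟨q, hq, hdom, hqpos⟩ :=
    exists_inv_apply_dominant_and_map_mem_hull hr hnorm hcartan hind (α j)
  set x := q⁻¹ (α j)
  have hqx : q x = α j := by simp [x]
  set h' := q⁻¹ * h * q
  have hh' : h' ∈ Subgroup.closure (Set.range r) := mul_mem (mul_mem (inv_mem hq) hh) hq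
  have hfix' : h' x = x := by simp [h', x, hfix]
  by_contra hne
  have hh'ne : h' ≠ 1 := fun h'1 => hne <| by
    rw [show h = q * h' * q⁻¹ by simp [h', mul_assoc], h'1, mul_one, mul_inv_cancel]
  obtain ⟨t, ht⟩ := exists_neg_mem_hull_of_ne_one hr hnorm hcartan hind hh' hh'ne
  have hvx : ⟪-(h' (α t)), x⟫ = -⟪α t, x⟫ := by
    have := inner_map_map_of_mem_closure hr hnorm hh' (α t) x
    rw [hfix'] at this
    rw [inner_neg_left, this]
  have hxt : ⟪α t, x⟫ = 0 :=
    le_antisymm (by linarith [inner_nonneg_of_mem_hull hdom ht]) (hdom t)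
  set δ := q (α t)
  have hδ : δ ∈ roots α r := map_mem_roots hq (mem_roots t)
  have hδperp : ⟪δ, α j⟫ = 0 := by rw [← hqx, inner_map_map_of_mem_closure hr hnorm hq, hxt]
  have hneg : -(h δ) ∈ PointedCone.hull ℝ (Set.range α) := by
    have : -(h δ) = q (-(h' (α t))) := by simp [h', δ, LinearEquiv.mul_apply]
    rw [this]
    exact map_mem_of_mem_hull_of_inner_nonpos q.toLinearMap hdom hqpos ht
      (by rw [hvx, hxt, neg_zero])
  exact ne_zero_of_mem_roots hr hnorm (map_mem_roots hh hδ)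
    (eq_zero_of_mem_hull_of_neg_mem_hull hind (hpos δ hδ (hqpos t hxt) hδperp) hneg)

end Dominance

section Conjugators

variable {ι : Type*} {α : ι → E} {r : ι → E ≃ₗ[ℝ] E}
  (hr : ∀ k, IsReflectionIn (α k) (r k)) (hnorm : ∀ k, ⟪α k, α k⟫ = 2)
include hr hnorm

theorem conj_eq_iff {w : E ≃ₗ[ℝ] E} (hw : w ∈ Subgroup.closure (Set.range r)) (i j : ι) :
    w * r j * w⁻¹ = r i ↔ w (α j) = α i ∨ w (α j) = -α i := by
  have hconj := (hr j).conj (inner_map_map_of_mem_closure hr hnorm hw)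
  constructor
  · intro h
    rw [h] at hconj
    exact (hr i).eq_or_eq_neg (hnorm i)
      (by rw [inner_map_map_of_mem_closure hr hnorm hw, hnorm]) hconj
  · rintro (h | h) <;> rw [h] at hconj
    · exact hconj.unique (hr i)
    · exact (neg_neg (α i) ▸ hconj.neg).unique (hr i)

theorem exists_apply_eq_of_reflTransGen {i j : ι}
    (h : Relation.ReflTransGen (fun a b => ⟪α a, α b⟫ = -1) i j) :
    ∃ w ∈ Subgroup.closure (Set.range r), w (α j) = α i := by
  induction h with
  | refl => exact ⟨1, one_mem _, rfl⟩
  | @tail b c _ hbc ih =>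
    obtain ⟨w, hw, hwb⟩ := ih
    have hcb : ⟪α c, α b⟫ = -1 := by rwa [real_inner_comm]
    refine ⟨w * r c * r b, mul_mem (mul_mem hw (Subgroup.subset_closure (Set.mem_range_self c)))
      (Subgroup.subset_closure (Set.mem_range_self b)), ?_⟩
    rw [LinearEquiv.mul_apply, LinearEquiv.mul_apply, hr b, hbc, hr c, inner_sub_right,
      real_inner_smul_right, hnorm, hcb, ← hwb]
    congr 1
    module

theorem exists_apply_eq_of_isChain {p : List ι} {i j : ι} (hne : p ≠ [])
    (hi : p.head? = some i) (hj : p.getLast? = some j)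
    (hp : p.IsChain fun a b => ⟪α a, α b⟫ = -1) :
    ∃ w ∈ Subgroup.closure (Set.range r), w (α j) = α i := by
  rw [List.head?_eq_some_head hne, Option.some_inj] at hi
  rw [List.getLast?_eq_some_getLast hne, Option.some_inj] at hj
  exact exists_apply_eq_of_reflTransGen hr hnorm
    (hi ▸ hj ▸ List.relationReflTransGen_of_exists_isChain p hp hne)

variable [Fintype ι] (hcartan : ∀ k l, k ≠ l → ⟪α k, α l⟫ = 0 ∨ ⟪α k, α l⟫ = -1)
  (hind : LinearIndependent ℝ α)
include hcartan hind

theorem IsMinConjugator.map_mem_hull {i j : ι} {w : E ≃ₗ[ℝ] E}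
    (hw : IsMinConjugator r i j w) :
    w (α j) = α i ∧ ∀ γ ∈ roots α r, γ ∈ PointedCone.hull ℝ (Set.range α) → ⟪γ, α j⟫ = 0 →
      w γ ∈ PointedCone.hull ℝ (Set.range α) := by
  obtain ⟨hmem, hconj, hmin⟩ := hw
  have key : ∀ γ ∈ roots α r, γ ∈ PointedCone.hull ℝ (Set.range α) →
      (γ = α j ∨ ⟪γ, α j⟫ = 0) → w γ ∈ PointedCone.hull ℝ (Set.range α) := by
    intro γ hγ hpos hγj
    obtain ⟨s, hs, hsγ⟩ := exists_isReflectionIn_of_mem_roots hr hnorm hγ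
    have hsj : s * r j * s⁻¹ = r j := by
      refine (conj_eq_iff hr hnorm hs j j).mpr ?_
      rcases hγj with rfl | h
      · exact .inr (hsγ.apply_self (hnorm j))
      · exact .inl (hsγ.apply_of_inner_eq_zero h)
    refine (mem_hull_or_neg_mem_hull_of_mem_roots hr hnorm hcartan
      (map_mem_roots hmem hγ)).resolve_right fun hneg => ?_
    have hlt := wordLength_mul_lt_of_neg_mem_hull hr hnorm hcartan hind hmem hγ hpos hsγ hneg
    have hle := hmin (w * s) (mul_mem hmem hs) <| by
      rw [show w * s * r j * (w * s)⁻¹ = w * (s * r j * s⁻¹) * w⁻¹ by group, hsj, hconj]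
    omega
  refine ⟨((conj_eq_iff hr hnorm hmem i j).mp hconj).resolve_right fun h => ?_,
    fun γ hγ hpos hperp => key γ hγ hpos (.inr hperp)⟩
  have := key (α j) (mem_roots j) (PointedCone.subset_hull (Set.mem_range_self j)) (.inl rfl)
  rw [h] at this
  exact ne_zero_of_mem_roots hr hnorm (mem_roots i) (eq_zero_of_mem_hull_of_neg_mem_hull hind
    (PointedCone.subset_hull (Set.mem_range_self i)) this)

theorem IsMinConjugator.unique [Finite (Subgroup.closure (Set.range r))] {i j : ι}
    {w w' : E ≃ₗ[ℝ] E} (hw : IsMinConjugator r i j w) (hw' : IsMinConjugator r i j w') :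
    w = w' := by
  obtain ⟨hwj, hwpos⟩ := hw.map_mem_hull hr hnorm hcartan hind
  obtain ⟨hw'j, hw'pos⟩ := hw'.map_mem_hull hr hnorm hcartan hind
  have hmem : w⁻¹ * w' ∈ Subgroup.closure (Set.range r) := mul_mem (inv_mem hw.1) hw'.1
  have hfix : (w⁻¹ * w') (α j) = α j := by
    rw [LinearEquiv.mul_apply, hw'j, ← hwj, ← LinearEquiv.mul_apply, inv_mul_cancel]
    rfl
  refine (inv_mul_eq_one.mp (eq_one_of_apply_eq_self_of_map_mem_hull hr hnorm hcartan hind hmem hfix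
    fun γ hγ hpos hperp => ?_))
  refine (mem_hull_or_neg_mem_hull_of_mem_roots hr hnorm hcartan
    (map_mem_roots hmem hγ)).resolve_right fun hneg => ?_
  have hperp' : ⟪-((w⁻¹ * w') γ), α j⟫ = 0 := by
    rw [inner_neg_left, ← hfix, inner_map_map_of_mem_closure hr hnorm hmem, hperp, neg_zero]
  have := hwpos _ (neg_mem_roots hr hnorm (map_mem_roots hmem hγ)) hneg hperp'
  rw [map_neg, ← LinearEquiv.mul_apply, mul_inv_cancel_left] at this
  exact ne_zero_of_mem_roots hr hnorm (map_mem_roots hw'.1 hγ)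
    (eq_zero_of_mem_hull_of_neg_mem_hull hind (hw'pos γ hγ hpos hperp) this)

end Conjugators

end SimplyLacedWeyl

open SimplyLacedWeyl

/-- In a finite simply laced Weyl group of connected type, for any two nodes `i, j`
there is a unique element `w_{ji}` of minimal length with `w_{ji} r_j w_{ji}⁻¹ = r_i`,
and it satisfies `w_{ij}⁻¹ = w_{ji}`. -/
theorem weyl_unique_min_conjugator (n d : ℕ)
    (α : Fin n → EuclideanSpace ℝ (Fin d))
    (hind : LinearIndependent ℝ α)
    (hnorm : ∀ i, ⟪α i, α i⟫ = 2)
    (hcartan : ∀ i j, i ≠ j → ⟪α i, α j⟫ = 0 ∨ ⟪α i, α j⟫ = -1)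
    (hconn : ∀ i j : Fin n, ∃ p : List (Fin n), p ≠ [] ∧ p.head? = some i ∧
      p.getLast? = some j ∧ p.Chain' (fun a b => ⟪α a, α b⟫ = -1))
    (r : Fin n → (EuclideanSpace ℝ (Fin d) ≃ₗ[ℝ] EuclideanSpace ℝ (Fin d)))
    (hr : ∀ i v, r i v = v - ⟪α i, v⟫ • α i)
    (W : Subgroup (EuclideanSpace ℝ (Fin d) ≃ₗ[ℝ] EuclideanSpace ℝ (Fin d)))
    (hW : W = Subgroup.closure (Set.range r))
    (hfin : Finite W)
    (ℓ : W → ℕ)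
    (hℓ : ∀ w : W, ℓ w = sInf {k | ∃ ω : List (Fin n),
      ω.length = k ∧ w.1 = (ω.map r).prod})
    (i j : Fin n) :
    (∃! w : W, (w.1 * r j * w.1⁻¹ = r i ∧
       ∀ v : W, v.1 * r j * v.1⁻¹ = r i → ℓ w ≤ ℓ v)) ∧
    (∀ w v : W,
      (w.1 * r j * w.1⁻¹ = r i ∧ ∀ u : W, u.1 * r j * u.1⁻¹ = r i → ℓ w ≤ ℓ u) →
      (v.1 * r i * v.1⁻¹ = r j ∧ ∀ u : W, u.1 * r i * u.1⁻¹ = r j → ℓ v ≤ ℓ u) →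
      w⁻¹ = v) := by
  subst hW
  have hℓ' : ∀ w, ℓ w = wordLength r w.1 := hℓ
  have hmin_iff : ∀ a b (w : Subgroup.closure (Set.range r)),
      (w.1 * r b * w.1⁻¹ = r a ∧ ∀ v : Subgroup.closure (Set.range r),
        v.1 * r b * v.1⁻¹ = r a → ℓ w ≤ ℓ v) ↔ IsMinConjugator r a b w := by
    intro a b w
    simp only [hℓ']
    exact ⟨fun ⟨h, hle⟩ => ⟨w.2, h, fun v hv => hle ⟨v, hv⟩⟩,
      fun ⟨_, h, hle⟩ => ⟨h, fun v => hle v.1 v.2⟩⟩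
  have huniq {a b w w'} := IsMinConjugator.unique (i := a) (j := b) (w := w) (w' := w')
    hr hnorm hcartan hind
  obtain ⟨p, hpne, hph, hpl, hpc⟩ := hconn i j
  obtain ⟨w₀, hw₀, hw₀j⟩ := exists_apply_eq_of_isChain hr hnorm hpne hph hpl hpc
  obtain ⟨w, hw⟩ :=
    exists_isMinConjugator ⟨w₀, hw₀, (conj_eq_iff hr hnorm hw₀ i j).mpr (.inl hw₀j)⟩
  have hinvol k : r k * r k = 1 := IsReflectionIn.mul_self (hnorm k) (hr k)
  exact ⟨⟨⟨w, hw.1⟩, (hmin_iff i j _).mpr hw,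
      fun v hv => Subtype.ext (huniq ((hmin_iff i j v).mp hv) hw)⟩,
    fun w v hw hv =>
      Subtype.ext (huniq (((hmin_iff i j w).mp hw).inv hinvol) ((hmin_iff j i v).mp hv))⟩
end

section
/- Let A be the Artin group of a connected simply laced spherical type with standard generators s_1,...,s_n, and let s_β denote the canonical lift to A of the reflection r_β for a positive root β (image under the section ψ of reduced words). If i is a node and β a positive root with (α_i, β) = 0, then s_i s_β = s_β s_i in A. -/
/-!
Let `ρ = r_β`. Since `β ⊥ α_i`, the reflection `r_i` commutes with `ρ`, and the determinant
(a sign character sending every simple reflection to `-1`) shows that `ℓ (r_i ρ) ≠ ℓ ρ`; as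
multiplying by `r_i` changes the length by at most one, one of `ρ`, `r_i ρ` is one letter longer
than the other. If `ℓ (r_i u) = ℓ u + 1` and `ω` is a reduced word for `u`, then both `i :: ω`
and `ω ++ [i]` are reduced words for `r_i u = u r_i`, so `ψ (r_i u) = s_i ψ u = ψ u s_i`.
Applied to `u = ρ` or to `u = r_i ρ`, this shows that `s_i` commutes with `ψ ρ`.
-/

noncomputable section

open scoped RealInnerProductSpace

/-- The braid relators defining the Artin group of a simply laced diagram with
adjacency relation `adj`. -/
def ArtinRels (n : ℕ) (adj : Fin n → Fin n → Prop) : Set (FreeGroup (Fin n)) :=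
  {w | (∃ i j, i ≠ j ∧ ¬ adj i j ∧
          w = FreeGroup.of i * FreeGroup.of j * (FreeGroup.of i)⁻¹ * (FreeGroup.of j)⁻¹) ∨
       (∃ i j, adj i j ∧
          w = FreeGroup.of i * FreeGroup.of j * FreeGroup.of i *
              (FreeGroup.of j)⁻¹ * (FreeGroup.of i)⁻¹ * (FreeGroup.of j)⁻¹)}

/-- The Artin group of the diagram. -/
abbrev Artin (n : ℕ) (adj : Fin n → Fin n → Prop) : Type := PresentedGroup (ArtinRels n adj)

/-- The standard generator `s_i` of the Artin group. -/
def sgen (n : ℕ) (adj : Fin n → Fin n → Prop) (i : Fin n) : Artin n adj :=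
  PresentedGroup.of i

theorem Subgroup.exists_list_map_prod_of_mem_closure_range {G ι : Type*} [Group G]
    {r : ι → G} (hr : ∀ j, (r j)⁻¹ = r j) {g : G} (hg : g ∈ Subgroup.closure (Set.range r)) :
    ∃ ω : List ι, g = (ω.map r).prod := by
  have hinv : (Set.range r)⁻¹ = Set.range r := by
    rw [Set.inv_range]
    simp only [hr]
  rw [← Subgroup.mem_toSubmonoid, Subgroup.closure_toSubmonoid, hinv, Set.union_self,
    ← FreeMonoid.mrange_lift] at hg
  obtain ⟨ω, rfl⟩ := hg
  exact ⟨ω.toList, FreeMonoid.lift_apply r ω⟩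

section WordLength

variable {G ι : Type*} [Group G]

def wordLength (r : ι → G) (g : G) : ℕ :=
  sInf {k | ∃ ω : List ι, ω.length = k ∧ g = (ω.map r).prod}

variable {r : ι → G}

theorem wordLength_le {g : G} {ω : List ι} (h : g = (ω.map r).prod) :
    wordLength r g ≤ ω.length :=
  Nat.sInf_le ⟨ω, rfl, h⟩

theorem exists_reduced_word (hgen : ∀ g : G, ∃ ω : List ι, g = (ω.map r).prod) (g : G) :
    ∃ ω : List ι, ω.length = wordLength r g ∧ g = (ω.map r).prod := by
  obtain ⟨ω, hω⟩ := hgen g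
  exact Nat.sInf_mem (s := {k | ∃ ω : List ι, ω.length = k ∧ g = (ω.map r).prod})
    ⟨ω.length, ω, rfl, hω⟩

theorem wordLength_gen_mul_le (hgen : ∀ g : G, ∃ ω : List ι, g = (ω.map r).prod)
    (i : ι) (g : G) : wordLength r (r i * g) ≤ wordLength r g + 1 := by
  obtain ⟨ω, hlen, hω⟩ := exists_reduced_word hgen g
  calc wordLength r (r i * g) ≤ (i :: ω).length := wordLength_le (by simp [hω])
    _ = wordLength r g + 1 := by simp [hlen]

theorem map_list_map_prod_eq_neg_one_pow {R : Type*} [Monoid R] [HasDistribNeg R]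
    (χ : G →* R) (hχ : ∀ j, χ (r j) = -1) (ω : List ι) :
    χ (ω.map r).prod = (-1) ^ ω.length := by
  rw [map_list_prod, List.map_map, show ⇑χ ∘ r = fun _ => -1 from funext hχ, List.map_const',
    List.prod_replicate]

theorem wordLength_gen_mul_ne {R : Type*} [Ring R] (hR : (-1 : R) ≠ 1)
    (χ : G →* R) (hχ : ∀ j, χ (r j) = -1)
    (hgen : ∀ g : G, ∃ ω : List ι, g = (ω.map r).prod) (i : ι) (g : G) :
    wordLength r (r i * g) ≠ wordLength r g := by
  have hsign : ∀ g, χ g = (-1) ^ wordLength r g := fun g => by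
    obtain ⟨ω, hlen, hω⟩ := exists_reduced_word hgen g
    rw [hω, map_list_map_prod_eq_neg_one_pow χ hχ, hlen, ← hω]
  intro h
  have hflip : (-1 : R) ^ wordLength r g = -(-1) ^ wordLength r g :=
    calc (-1 : R) ^ wordLength r g = χ (r i * g) := by rw [hsign, h]
      _ = -(-1) ^ wordLength r g := by rw [map_mul, hχ, neg_one_mul, hsign]
  rcases neg_one_pow_eq_or R (wordLength r g) with h1 | h1 <;> rw [h1] at hflip
  · exact hR hflip.symm
  · exact hR (by rw [neg_neg] at hflip; exact hflip)

variable {M : Type*} [Monoid M]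

def IsReducedWordLift (r : ι → G) (s : ι → M) (ψ : G → M) : Prop :=
  ∀ (g : G) (ω : List ι), g = (ω.map r).prod → ω.length = wordLength r g → ψ g = (ω.map s).prod

namespace IsReducedWordLift

variable {s : ι → M} {ψ : G → M}

theorem apply_gen_mul_of_wordLength_eq_succ (hψ : IsReducedWordLift r s ψ)
    (hgen : ∀ g : G, ∃ ω : List ι, g = (ω.map r).prod) {i : ι} {u : G}
    (hcomm : Commute (r i) u) (hlen : wordLength r (r i * u) = wordLength r u + 1) :
    ψ (r i * u) = s i * ψ u ∧ ψ (r i * u) = ψ u * s i := by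
  obtain ⟨ω, hωlen, hω⟩ := exists_reduced_word hgen u
  have hψu := hψ u ω hω hωlen
  constructor
  · rw [hψ _ (i :: ω) (by simp [hω]) (by simp [hωlen, hlen]), hψu]
    simp
  · rw [hψ _ (ω ++ [i]) (by rw [hcomm.eq, hω]; simp) (by simp [hωlen, hlen]), hψu]
    simp

theorem commute_gen_of_wordLength_gen_mul_ne (hψ : IsReducedWordLift r s ψ)
    (hgen : ∀ g : G, ∃ ω : List ι, g = (ω.map r).prod) {i : ι} (hi : r i * r i = 1) {t : G}
    (hcomm : Commute (r i) t) (hne : wordLength r (r i * t) ≠ wordLength r t) :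
    Commute (s i) (ψ t) := by
  have hback : r i * (r i * t) = t := by rw [← mul_assoc, hi, one_mul]
  have hup := wordLength_gen_mul_le hgen i t
  have hdown := wordLength_gen_mul_le hgen i (r i * t)
  rw [hback] at hdown
  rcases (by omega : wordLength r (r i * t) = wordLength r t + 1 ∨
      wordLength r t = wordLength r (r i * t) + 1) with h | h
  · obtain ⟨hleft, hright⟩ := hψ.apply_gen_mul_of_wordLength_eq_succ hgen hcomm h
    exact hleft.symm.trans hright
  · obtain ⟨hleft, hright⟩ := hψ.apply_gen_mul_of_wordLength_eq_succ hgen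
      ((Commute.refl (r i)).mul_right hcomm) (by rwa [hback])
    rw [hback] at hleft hright
    calc s i * ψ t = s i * ψ (r i * t) * s i := by rw [hright, mul_assoc]
      _ = ψ t * s i := by rw [← hleft]

end IsReducedWordLift

end WordLength

section RootReflection

variable {E : Type*} [NormedAddCommGroup E] [InnerProductSpace ℝ E]

def IsRootReflection (u : E) (f : E ≃ₗ[ℝ] E) : Prop :=
  ∀ v, f v = v - ⟪u, v⟫ • u

namespace IsRootReflection

variable {u : E} {f : E ≃ₗ[ℝ] E}

theorem mul_self (hf : IsRootReflection u f) (hu : ⟪u, u⟫ = 2) : f * f = 1 := by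
  refine LinearEquiv.ext fun v => ?_
  change f (f v) = v
  rw [hf, hf, inner_sub_right, inner_smul_right, hu]
  module

theorem commute {u' : E} {f' : E ≃ₗ[ℝ] E} (hf : IsRootReflection u f)
    (hf' : IsRootReflection u' f') (horth : ⟪u, u'⟫ = 0) : Commute f f' := by
  refine LinearEquiv.ext fun v => ?_
  change f (f' v) = f' (f v)
  rw [hf, hf', hf', hf, inner_sub_right, inner_sub_right, inner_smul_right, inner_smul_right,
    horth, real_inner_comm u, horth]
  module

theorem det [FiniteDimensional ℝ E] (hf : IsRootReflection u f) (hu : ⟪u, u⟫ = 2) :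
    LinearMap.det (f : E →ₗ[ℝ] E) = -1 := by
  have hu0 : u ≠ 0 := by
    rintro rfl
    simp at hu
  set K : Submodule ℝ E := ℝ ∙ u
  have hfK : (f : E →ₗ[ℝ] E) = Kᗮ.reflection.toLinearMap := by
    refine LinearMap.ext fun v => ?_
    have hproj : K.starProjection v = (⟪u, v⟫ / 2) • u := by
      rw [Submodule.starProjection_singleton, ← real_inner_self_eq_norm_sq, hu]
      norm_cast
    have hproj' : Kᗮ.starProjection v = v - (⟪u, v⟫ / 2) • u := by
      rw [← hproj]
      linear_combination (norm := module) K.starProjection_add_starProjection_orthogonal v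
    change f v = Kᗮ.reflection v
    rw [hf, Submodule.reflection_apply, hproj', two_smul]
    module
  rw [hfK, Submodule.det_reflection, Submodule.orthogonal_orthogonal,
    finrank_span_singleton hu0, pow_one]

end IsRootReflection

end RootReflection

theorem artin_si_commutes_with_sbeta_general (n d : ℕ)
    (α : Fin n → EuclideanSpace ℝ (Fin d))
    (hnorm : ∀ i, ⟪α i, α i⟫ = 2)
    (r : Fin n → (EuclideanSpace ℝ (Fin d) ≃ₗ[ℝ] EuclideanSpace ℝ (Fin d)))
    (hr : ∀ i v, r i v = v - ⟪α i, v⟫ • α i)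
    (W : Subgroup (EuclideanSpace ℝ (Fin d) ≃ₗ[ℝ] EuclideanSpace ℝ (Fin d)))
    (hW : W = Subgroup.closure (Set.range r))
    (ℓ : W → ℕ)
    (hℓ : ∀ w : W, ℓ w = sInf {k | ∃ ω : List (Fin n),
      ω.length = k ∧ w.1 = (ω.map r).prod})
    (adj : Fin n → Fin n → Prop)
    (ψ : W → Artin n adj)
    (hψ : ∀ (w : W) (ω : List (Fin n)), w.1 = (ω.map r).prod → ω.length = ℓ w →
      ψ w = (ω.map (sgen n adj)).prod)
    (i : Fin n) (β : EuclideanSpace ℝ (Fin d))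
    (ρ : W) (hρ : ∀ v, ρ.1 v = v - ⟪β, v⟫ • β)
    (horth : ⟪α i, β⟫ = 0) :
    sgen n adj i * ψ ρ = ψ ρ * sgen n adj i := by
  let rW : Fin n → W := fun j => ⟨r j, hW ▸ Subgroup.subset_closure ⟨j, rfl⟩⟩
  have hword : ∀ (w : W) (ω : List (Fin n)), w.1 = (ω.map r).prod ↔ w = (ω.map rW).prod := by
    intro w ω
    rw [Subtype.ext_iff, Subgroup.val_list_prod, List.map_map]
    rfl
  have hinv : ∀ j, (r j)⁻¹ = r j := fun j =>
    inv_eq_of_mul_eq_one_right (IsRootReflection.mul_self (hr j) (hnorm j))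
  have hgen : ∀ w : W, ∃ ω : List (Fin n), w = (ω.map rW).prod := fun w =>
    (Subgroup.exists_list_map_prod_of_mem_closure_range hinv (hW ▸ w.2)).imp
      fun ω => (hword w ω).1
  have hlift : IsReducedWordLift rW (sgen n adj) ψ := fun w ω hω hlen =>
    hψ w ω ((hword w ω).2 hω) (by simpa only [hℓ, wordLength, hword] using hlen)
  let χ : W →* ℝ := (Units.coeHom ℝ).comp (LinearEquiv.det.comp W.subtype)
  have hχ : ∀ j, χ (rW j) = -1 := fun j =>
    (LinearEquiv.coe_det _).trans (IsRootReflection.det (hr j) (hnorm j))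
  have hcomm : Commute (rW i) ρ := Subtype.ext (IsRootReflection.commute (hr i) hρ horth)
  exact (hlift.commute_gen_of_wordLength_gen_mul_ne hgen
    (Subtype.ext (IsRootReflection.mul_self (hr i) (hnorm i))) hcomm
    (wordLength_gen_mul_ne (by norm_num) χ hχ hgen i ρ)).eq

/-- Let `A` be the Artin group of a connected simply laced spherical type, `W` the
corresponding Weyl group with simple roots `α`, length function `ℓ`, and `ψ : W → A`
the canonical section sending an element with reduced word `ω` to the corresponding
product of generators. If `β` is a positive root orthogonal to the simple root `α i`,
and `ρ ∈ W` is the reflection with root `β`, then `s_i` commutes with `s_β = ψ ρ`. -/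
theorem artin_si_commutes_with_sbeta (n d : ℕ)
    (α : Fin n → EuclideanSpace ℝ (Fin d))
    (hind : LinearIndependent ℝ α)
    (hnorm : ∀ i, ⟪α i, α i⟫ = 2)
    (hcartan : ∀ i j, i ≠ j → ⟪α i, α j⟫ = 0 ∨ ⟪α i, α j⟫ = -1)
    (hconn : ∀ i j : Fin n, ∃ p : List (Fin n), p ≠ [] ∧ p.head? = some i ∧
      p.getLast? = some j ∧ p.Chain' (fun a b => ⟪α a, α b⟫ = -1))
    (r : Fin n → (EuclideanSpace ℝ (Fin d) ≃ₗ[ℝ] EuclideanSpace ℝ (Fin d)))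
    (hr : ∀ i v, r i v = v - ⟪α i, v⟫ • α i)
    (W : Subgroup (EuclideanSpace ℝ (Fin d) ≃ₗ[ℝ] EuclideanSpace ℝ (Fin d)))
    (hW : W = Subgroup.closure (Set.range r))
    (hfin : Finite W)
    (Φ : Set (EuclideanSpace ℝ (Fin d)))
    (hΦ : Φ = {β | ∃ w ∈ W, ∃ i, w (α i) = β})
    (ℓ : W → ℕ)
    (hℓ : ∀ w : W, ℓ w = sInf {k | ∃ ω : List (Fin n),
      ω.length = k ∧ w.1 = (ω.map r).prod})
    (adj : Fin n → Fin n → Prop)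
    (hadj : ∀ i j, adj i j ↔ ⟪α i, α j⟫ = -1)
    (ψ : W → Artin n adj)
    (hψ : ∀ (w : W) (ω : List (Fin n)), w.1 = (ω.map r).prod → ω.length = ℓ w →
      ψ w = (ω.map (sgen n adj)).prod)
    (i : Fin n) (β : EuclideanSpace ℝ (Fin d)) (c : Fin n → ℕ)
    (hβΦ : β ∈ Φ) (hβc : β = ∑ k, (c k : ℝ) • α k)
    (ρ : W) (hρ : ∀ v, ρ.1 v = v - ⟪β, v⟫ • β)
    (horth : ⟪α i, β⟫ = 0) :
    sgen n adj i * ψ ρ = ψ ρ * sgen n adj i :=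
  artin_si_commutes_with_sbeta_general n d α hnorm r hr W hW ℓ hℓ adj ψ hψ i β ρ hρ horth
end
end

section
/- Let M be a connected simply laced spherical Coxeter diagram with highest root α_0, and let C be the set of nodes i with (α_i, α_0) = 0. In the Artin group A, define d_β = ψ(w_{α_0,β}^{-1}) and h_{β,i} = d_β^{-1} s_i d_β for a positive root β and a node i with (α_i, β) = 0. Then for every such pair (β, i) there exists a node j in C with h_{β,i} = s_j. -/
/-!
Put `γ = w α_i`. A positive root `δ ⊥ β` stays positive under the minimal `w`: otherwise the
reflection in `δ` fixes `β` and, by the strong exchange condition, shortens `w`. Applied to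
`δ = α_i` this makes `γ` a positive root orthogonal to `α₀`. If `γ` were not simple, pick `k` with
`(α_k, γ) > 0`; then `s_k γ` is positive and `α₀` is dominant, so `(α_k, α₀) = 0`. Hence
`δ = w⁻¹ α_k` is a positive root orthogonal to `β`, and so is `s_i δ ≠ α_i`, yet
`w s_i δ = α_k - (α_k, γ) γ` is negative. So `w α_i = α_j`, which gives `(α_j, α₀) = (α_i, β) = 0`
and `s_i w⁻¹ = w⁻¹ s_j` with both sides of length `ℓ(w⁻¹) + 1`; reduced words of the two sides
give `s_i ψ(w⁻¹) = ψ(w⁻¹) s_j` in the Artin group.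
-/

noncomputable section

open scoped RealInnerProductSpace

structure SimplyLacedBase (n : ℕ) (E : Type*) [NormedAddCommGroup E]
    [InnerProductSpace ℝ E] where
  α : Fin n → E
  linearIndependent : LinearIndependent ℝ α
  inner_self : ∀ i, ⟪α i, α i⟫ = 2
  inner_of_ne : ∀ i j, i ≠ j → ⟪α i, α j⟫ = 0 ∨ ⟪α i, α j⟫ = -1

namespace SimplyLacedBase

variable {n : ℕ} {E : Type*} [NormedAddCommGroup E] [InnerProductSpace ℝ E]
  (S : SimplyLacedBase n E)

/-- Built from `Submodule.reflection`, so that it is an isometry of determinant `-1`;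
`reflection_apply` gives the usual formula. -/
def reflection (i : Fin n) : E ≃ₗ[ℝ] E := (ℝ ∙ S.α i)ᗮ.reflection.toLinearEquiv

def weylGroup : Subgroup (E ≃ₗ[ℝ] E) := Subgroup.closure (Set.range S.reflection)

def simple (i : Fin n) : S.weylGroup := ⟨S.reflection i, Subgroup.subset_closure ⟨i, rfl⟩⟩

def wordProd (ω : List (Fin n)) : S.weylGroup := (ω.map S.simple).prod

def length (w : S.weylGroup) : ℕ :=
  sInf {k | ∃ ω : List (Fin n), ω.length = k ∧ w.1 = (ω.map S.reflection).prod}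

def roots : Set E := {β | ∃ w ∈ S.weylGroup, ∃ i, w (S.α i) = β}

def positiveCone : PointedCone ℝ E := PointedCone.hull ℝ (Set.range S.α)

def IsCanonicalSection {G : Type*} [Group G] (g : Fin n → G) (ψ : S.weylGroup → G) : Prop :=
  ∀ (w : S.weylGroup) (ω : List (Fin n)), w.1 = (ω.map S.reflection).prod →
    ω.length = S.length w → ψ w = (ω.map g).prod

def IsMinimalFor (β : E) (w : S.weylGroup) : Prop :=
  ∀ v : S.weylGroup, v • β = w • β → S.length w ≤ S.length v

lemma reflection_apply (i : Fin n) (x : E) : S.reflection i x = x - ⟪S.α i, x⟫ • S.α i := by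
  change (ℝ ∙ S.α i)ᗮ.reflection x = _
  rw [Submodule.reflection_orthogonal_apply, Submodule.reflection_singleton_apply,
    RCLike.ofReal_real_eq_id, id, ← real_inner_self_eq_norm_sq, S.inner_self]
  module

lemma simple_smul (i : Fin n) (x : E) : S.simple i • x = x - ⟪S.α i, x⟫ • S.α i :=
  S.reflection_apply i x

@[simp]
lemma simple_mul_self (i : Fin n) : S.simple i * S.simple i = 1 := by
  ext x
  change S.simple i • S.simple i • x = x
  simp only [simple_smul, inner_sub_right, inner_smul_right, S.inner_self]
  module

@[simp]
lemma simple_inv (i : Fin n) : (S.simple i)⁻¹ = S.simple i :=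
  inv_eq_of_mul_eq_one_right (S.simple_mul_self i)

lemma inner_smul_smul (w : S.weylGroup) (x y : E) : ⟪w • x, w • y⟫ = ⟪x, y⟫ := by
  obtain ⟨w, hw⟩ := w
  change ⟪w x, w y⟫ = ⟪x, y⟫
  induction hw using Subgroup.closure_induction generalizing x y with
  | mem _ h =>
    obtain ⟨i, rfl⟩ := h
    exact (ℝ ∙ S.α i)ᗮ.reflection.inner_map_map x y
  | one => rfl
  | mul _ _ _ _ hu hv => exact (hu _ _).trans (hv x y)
  | inv u _ hu => simpa using (hu (u⁻¹ x) (u⁻¹ y)).symm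

lemma inner_smul_left_eq_inner_inv_smul (w : S.weylGroup) (x y : E) :
    ⟪w • x, y⟫ = ⟪x, w⁻¹ • y⟫ := by
  rw [← S.inner_smul_smul w x, smul_inv_smul]

@[simp]
lemma wordProd_nil : S.wordProd [] = 1 := rfl

@[simp]
lemma wordProd_cons (i : Fin n) (ω : List (Fin n)) :
    S.wordProd (i :: ω) = S.simple i * S.wordProd ω := List.prod_cons

@[simp]
lemma wordProd_append (ω ω' : List (Fin n)) :
    S.wordProd (ω ++ ω') = S.wordProd ω * S.wordProd ω' := by
  simp [wordProd]

lemma coe_wordProd (ω : List (Fin n)) : (S.wordProd ω).1 = (ω.map S.reflection).prod := by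
  rw [wordProd, Subgroup.val_list_prod, List.map_map]
  rfl

lemma wordProd_reverse (ω : List (Fin n)) : S.wordProd ω.reverse = (S.wordProd ω)⁻¹ := by
  induction ω with
  | nil => simp
  | cons i ω ih => simp [ih]

lemma exists_wordProd_eq (w : S.weylGroup) : ∃ ω, S.wordProd ω = w := by
  obtain ⟨w, hw⟩ := w
  induction hw using Subgroup.closure_induction with
  | mem _ h =>
    obtain ⟨i, rfl⟩ := h
    exact ⟨[i], by simp; rfl⟩
  | one => exact ⟨[], rfl⟩
  | mul u v hu hv ihu ihv =>
    obtain ⟨ω, hω⟩ := ihu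
    obtain ⟨ω', hω'⟩ := ihv
    exact ⟨ω ++ ω', by rw [wordProd_append, hω, hω']; rfl⟩
  | inv u hu ih =>
    obtain ⟨ω, hω⟩ := ih
    exact ⟨ω.reverse, by rw [wordProd_reverse, hω]; rfl⟩

lemma wordProd_eq_iff {w : S.weylGroup} {ω : List (Fin n)} :
    S.wordProd ω = w ↔ w.1 = (ω.map S.reflection).prod := by
  rw [← coe_wordProd, eq_comm, Subtype.ext_iff]

lemma length_wordProd_le (ω : List (Fin n)) : S.length (S.wordProd ω) ≤ ω.length :=
  Nat.sInf_le ⟨ω, rfl, S.coe_wordProd ω⟩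

lemma exists_reduced_word (w : S.weylGroup) :
    ∃ ω : List (Fin n), ω.length = S.length w ∧ S.wordProd ω = w := by
  obtain ⟨ω, hω⟩ := S.exists_wordProd_eq w
  obtain ⟨ω', hlen, hω'⟩ : S.length w ∈
      {k | ∃ ω : List (Fin n), ω.length = k ∧ w.1 = (ω.map S.reflection).prod} :=
    Nat.sInf_mem ⟨ω.length, ω, rfl, S.wordProd_eq_iff.mp hω⟩
  exact ⟨ω', hlen, S.wordProd_eq_iff.mpr hω'⟩

lemma length_mul_simple_le (w : S.weylGroup) (i : Fin n) :
    S.length (w * S.simple i) ≤ S.length w + 1 := by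
  obtain ⟨ω, hlen, rfl⟩ := S.exists_reduced_word w
  simpa [← hlen] using S.length_wordProd_le (ω ++ [i])

lemma conj_eq_of_simple_mul_eq {G : Type*} [Group G] (g : Fin n → G) (ψ : S.weylGroup → G)
    (hψ : S.IsCanonicalSection g ψ)
    {u : S.weylGroup} {i j : Fin n} (hij : S.simple i * u = u * S.simple j)
    (hlen : S.length (u * S.simple j) = S.length u + 1) : (ψ u)⁻¹ * g i * ψ u = g j := by
  obtain ⟨ω, hω, rfl⟩ := S.exists_reduced_word u
  have hu := hψ _ ω (S.wordProd_eq_iff.mp rfl) hω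
  have hright := hψ (S.wordProd ω * S.simple j) (ω ++ [j]) (S.wordProd_eq_iff.mp (by simp))
    (by simp [hlen, hω])
  have hleft := hψ (S.wordProd ω * S.simple j) (i :: ω)
    (S.wordProd_eq_iff.mp (by rw [wordProd_cons, hij])) (by simp [hlen, hω])
  simp only [List.map_append, List.map_cons, List.map_nil, List.prod_append, List.prod_cons,
    List.prod_nil, mul_one, ← hu] at hleft hright
  rw [mul_assoc, ← hleft, hright, inv_mul_cancel_left]

lemma mem_roots {γ : E} : γ ∈ S.roots ↔ ∃ (w : S.weylGroup) (i : Fin n), w • S.α i = γ :=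
  ⟨fun ⟨w, hw, i, h⟩ => ⟨⟨w, hw⟩, i, h⟩, fun ⟨w, i, h⟩ => ⟨w.1, w.2, i, h⟩⟩

lemma simpleRoot_mem_roots (i : Fin n) : S.α i ∈ S.roots := S.mem_roots.mpr ⟨1, i, one_smul _ _⟩

lemma smul_mem_roots (w : S.weylGroup) {γ : E} (hγ : γ ∈ S.roots) : w • γ ∈ S.roots := by
  obtain ⟨v, i, rfl⟩ := S.mem_roots.mp hγ
  exact S.mem_roots.mpr ⟨w * v, i, mul_smul _ _ _⟩

lemma inner_self_of_mem_roots {γ : E} (hγ : γ ∈ S.roots) : ⟪γ, γ⟫ = 2 := by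
  obtain ⟨w, i, rfl⟩ := S.mem_roots.mp hγ
  rw [S.inner_smul_smul, S.inner_self]

lemma ne_zero_of_mem_roots {γ : E} (hγ : γ ∈ S.roots) : γ ≠ 0 := by
  rintro rfl
  simpa using S.inner_self_of_mem_roots hγ

lemma simple_smul_self (i : Fin n) : S.simple i • S.α i = -S.α i := by
  rw [simple_smul, S.inner_self]
  module

lemma neg_mem_roots {γ : E} (hγ : γ ∈ S.roots) : -γ ∈ S.roots := by
  obtain ⟨w, i, rfl⟩ := S.mem_roots.mp hγ
  exact S.mem_roots.mpr ⟨w * S.simple i, i, by rw [mul_smul, simple_smul_self, smul_neg]⟩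

lemma exists_reflection_of_mem_roots {δ : E} (hδ : δ ∈ S.roots) :
    ∃ R : S.weylGroup, ∀ x, R • x = x - ⟪δ, x⟫ • δ := by
  obtain ⟨u, i, rfl⟩ := S.mem_roots.mp hδ
  refine ⟨u * S.simple i * u⁻¹, fun x => ?_⟩
  rw [mul_smul, mul_smul, simple_smul, smul_sub, smul_inv_smul, smul_comm,
    S.inner_smul_left_eq_inner_inv_smul]

lemma simple_mul_eq_mul_of_smul_eq {u R : S.weylGroup} {δ : E} {i : Fin n}
    (hR : ∀ x, R • x = x - ⟪δ, x⟫ • δ) (hu : u • δ = S.α i) :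
    S.simple i * u = u * R := by
  ext x
  change S.simple i • u • x = u • R • x
  rw [simple_smul, hR, smul_sub, smul_comm u ⟪δ, x⟫ δ, hu, ← S.inner_smul_smul u δ x, hu]

lemma simple_smul_simpleRoot_of_inner_eq_zero {s t : Fin n} (hst : ⟪S.α s, S.α t⟫ = 0) :
    S.simple t • S.α s = S.α s := by
  rw [simple_smul, real_inner_comm, hst, zero_smul, sub_zero]

lemma simple_smul_simpleRoot_of_inner_eq_neg_one {s t : Fin n} (hst : ⟪S.α s, S.α t⟫ = -1) :
    S.simple t • S.α s = S.α s + S.α t := by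
  rw [simple_smul, real_inner_comm, hst, neg_one_smul, sub_neg_eq_add]

lemma simple_mul_comm_of_inner_eq_zero {s t : Fin n} (hst : ⟪S.α s, S.α t⟫ = 0) :
    S.simple s * S.simple t = S.simple t * S.simple s := by
  have hts : ⟪S.α t, S.α s⟫ = 0 := by rwa [real_inner_comm]
  ext x
  change S.simple s • S.simple t • x = S.simple t • S.simple s • x
  simp only [simple_smul, inner_sub_right, real_inner_smul_right, hst, hts]
  module

lemma simple_braid_of_inner_eq_neg_one {s t : Fin n} (hst : ⟪S.α s, S.α t⟫ = -1) :
    S.simple s * (S.simple t * S.simple s) = S.simple t * (S.simple s * S.simple t) := by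
  have hts : ⟪S.α t, S.α s⟫ = -1 := by rwa [real_inner_comm]
  ext x
  change S.simple s • S.simple t • S.simple s • x = S.simple t • S.simple s • S.simple t • x
  simp only [simple_smul, inner_sub_right, real_inner_smul_right, hst, hts, S.inner_self]
  module

lemma simpleRoot_mem_positiveCone (i : Fin n) : S.α i ∈ S.positiveCone :=
  PointedCone.subset_hull ⟨i, rfl⟩

lemma mem_positiveCone_iff {v : E} :
    v ∈ S.positiveCone ↔ ∃ c : Fin n → ℝ, (∀ k, 0 ≤ c k) ∧ ∑ k, c k • S.α k = v := by
  rw [positiveCone, PointedCone.hull, Submodule.mem_span_range_iff_exists_fun]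
  constructor
  · rintro ⟨c, rfl⟩
    exact ⟨fun k => c k, fun k => (c k).2, rfl⟩
  · rintro ⟨c, hc, rfl⟩
    exact ⟨fun k => ⟨c k, hc k⟩, rfl⟩

lemma inner_nonneg_of_mem_positiveCone {x v : E} (hx : ∀ k, 0 ≤ ⟪S.α k, x⟫)
    (hv : v ∈ S.positiveCone) : 0 ≤ ⟪v, x⟫ := by
  obtain ⟨c, hc, rfl⟩ := S.mem_positiveCone_iff.mp hv
  rw [sum_inner]
  exact Finset.sum_nonneg fun k _ => by rw [real_inner_smul_left]; exact mul_nonneg (hc k) (hx k)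

lemma exists_inner_pos_of_mem_positiveCone {v : E} (hv : v ∈ S.positiveCone) (hv0 : 0 < ⟪v, v⟫) :
    ∃ k, 0 < ⟪S.α k, v⟫ := by
  by_contra! h
  have := S.inner_nonneg_of_mem_positiveCone (x := -v) (fun k => by simpa using h k) hv
  simp only [inner_neg_right] at this
  linarith

lemma eq_zero_of_mem_positiveCone_of_neg_mem {v : E} (hv : v ∈ S.positiveCone)
    (hv' : -v ∈ S.positiveCone) : v = 0 := by
  obtain ⟨c, hc, rfl⟩ := S.mem_positiveCone_iff.mp hv
  obtain ⟨e, he, hev⟩ := S.mem_positiveCone_iff.mp hv'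
  have hsum : ∑ k, (c k + e k) • S.α k = 0 := by
    simp only [add_smul, Finset.sum_add_distrib, hev, add_neg_cancel]
  have hce := Fintype.linearIndependent_iff.mp S.linearIndependent _ hsum
  refine Finset.sum_eq_zero fun k _ => ?_
  rw [show c k = 0 by linarith [hce k, hc k, he k], zero_smul]

lemma eq_simpleRoot_of_smul_sub_mem_positiveCone {θ : E} {a : ℝ} {k : Fin n}
    (hθ : θ ∈ S.roots) (hθpos : θ ∈ S.positiveCone) (h : a • S.α k - θ ∈ S.positiveCone) :
    θ = S.α k := by
  obtain ⟨c, hc, rfl⟩ := S.mem_positiveCone_iff.mp hθpos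
  obtain ⟨e, he, hsum⟩ := S.mem_positiveCone_iff.mp h
  have hzero : ∑ j, (c j + e j - if j = k then a else 0) • S.α j = 0 := by
    simp [sub_smul, add_smul, Finset.sum_sub_distrib, Finset.sum_add_distrib, hsum, ite_smul]
  have hce := Fintype.linearIndependent_iff.mp S.linearIndependent _ hzero
  have hθk : ∑ j, c j • S.α j = c k • S.α k := by
    refine Finset.sum_eq_single k (fun j _ hj => ?_) (by simp)
    have := hce j
    rw [if_neg hj] at this
    rw [show c j = 0 by linarith [hc j, he j], zero_smul]
  have hnorm := S.inner_self_of_mem_roots hθ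
  rw [hθk, real_inner_smul_left, real_inner_smul_right, S.inner_self] at hnorm
  rw [hθk, show c k = 1 by nlinarith [hc k], one_smul]

lemma exists_int_inner_simpleRoot (i j : Fin n) : ∃ z : ℤ, ⟪S.α i, S.α j⟫ = z := by
  rcases eq_or_ne i j with rfl | hij
  · exact ⟨2, by rw [S.inner_self]; norm_num⟩
  · rcases S.inner_of_ne i j hij with h | h
    · exact ⟨0, by rw [h]; norm_num⟩
    · exact ⟨-1, by rw [h]; norm_num⟩

lemma inner_simpleRoot_nonneg_of_isHighest {α₀ : E} {c₀ : Fin n → ℕ} (hα₀ : α₀ ∈ S.roots)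
    (hα₀c : α₀ = ∑ k, (c₀ k : ℝ) • S.α k)
    (hhighest : ∀ β ∈ S.roots, ∀ c : Fin n → ℕ, β = ∑ k, (c k : ℝ) • S.α k → ∀ k, c k ≤ c₀ k)
    (i : Fin n) : 0 ≤ ⟪S.α i, α₀⟫ := by
  obtain ⟨z, hz⟩ : ∃ z : ℤ, ⟪S.α i, α₀⟫ = z := by
    choose a ha using S.exists_int_inner_simpleRoot i
    exact ⟨∑ k, c₀ k * a k, by simp [hα₀c, inner_sum, real_inner_smul_right, ha]⟩
  rw [hz]
  -- otherwise `σ i • α₀ = α₀ - z • α i` would exceed `α₀` in the coefficient of `α i`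
  by_contra! hneg
  have hz' : z < 0 := by exact_mod_cast hneg
  have hrefl : S.simple i • α₀ =
      ∑ k, ((c₀ k + if k = i then (-z).toNat else 0 : ℕ) : ℝ) • S.α k := by
    have : (((-z).toNat : ℕ) : ℝ) = -z := by exact_mod_cast Int.toNat_of_nonneg (by omega)
    rw [simple_smul, hz]
    simp [hα₀c, add_smul, Finset.sum_add_distrib, ite_smul, this, sub_eq_add_neg]
  have := hhighest _ (S.smul_mem_roots _ hα₀) _ hrefl i
  simp at this
  omega

section FiniteDimensional

variable [FiniteDimensional ℝ E]

lemma det_simple (i : Fin n) : LinearEquiv.det (S.simple i).1 = -1 := by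
  have hα : S.α i ≠ 0 := S.ne_zero_of_mem_roots (S.simpleRoot_mem_roots i)
  change ((ℝ ∙ S.α i)ᗮ.reflection.toLinearEquiv).det = -1
  rw [Submodule.linearEquiv_det_reflection, Submodule.orthogonal_orthogonal,
    finrank_span_singleton hα, pow_one]

lemma det_eq_neg_one_pow_length (w : S.weylGroup) :
    LinearEquiv.det w.1 = (-1) ^ S.length w := by
  obtain ⟨ω, hlen, rfl⟩ := S.exists_reduced_word w
  rw [← hlen]
  clear hlen
  induction ω with
  | nil => simp
  | cons i ω ih =>
    rw [wordProd_cons, Subgroup.coe_mul, map_mul, det_simple, ih, List.length_cons, pow_succ']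

lemma length_mul_simple (w : S.weylGroup) (i : Fin n) :
    S.length (w * S.simple i) = S.length w + 1 ∨ S.length (w * S.simple i) + 1 = S.length w := by
  have hne : S.length (w * S.simple i) ≠ S.length w := by
    intro h
    have hdet := S.det_eq_neg_one_pow_length (w * S.simple i)
    rw [Subgroup.coe_mul, map_mul, det_simple, det_eq_neg_one_pow_length, h] at hdet
    exact absurd (congrArg Units.val (mul_eq_left.mp hdet)) (by norm_num)
  have hle := S.length_mul_simple_le (w * S.simple i) i
  rw [mul_assoc, simple_mul_self, mul_one] at hle
  have := S.length_mul_simple_le w i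
  omega

lemma length_lt_mul_simple_of_inner_eq_zero {v : S.weylGroup} {s t : Fin n}
    (hst : ⟪S.α s, S.α t⟫ = 0) (ht : S.length v < S.length (v * S.simple t))
    (hts : S.length (v * S.simple t) < S.length (v * S.simple t * S.simple s)) :
    S.length v < S.length (v * S.simple s) := by
  have hle := S.length_mul_simple_le (v * S.simple s) t
  rw [mul_assoc, S.simple_mul_comm_of_inner_eq_zero hst, ← mul_assoc] at hle
  have := S.length_mul_simple_le v t
  rcases S.length_mul_simple v s with h | h <;> omega

lemma length_lt_mul_simple_of_inner_eq_neg_one {v : S.weylGroup} {s t : Fin n}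
    (hst : ⟪S.α s, S.α t⟫ = -1) (ht : S.length v < S.length (v * S.simple t))
    (hts : S.length (v * S.simple t) < S.length (v * S.simple t * S.simple s))
    (hs : S.length (v * S.simple s) < S.length v) :
    S.length (v * S.simple s) < S.length (v * S.simple s * S.simple t) := by
  have hbraid :
      v * S.simple t * S.simple s = v * S.simple s * S.simple t * S.simple s * S.simple t := by
    simp only [mul_assoc, S.simple_braid_of_inner_eq_neg_one hst]
    simp [← mul_assoc]
  have h1 := S.length_mul_simple_le (v * S.simple s * S.simple t * S.simple s) t
  have h2 := S.length_mul_simple_le (v * S.simple s * S.simple t) s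
  have := S.length_mul_simple_le v t
  rw [← hbraid] at h1
  rcases S.length_mul_simple (v * S.simple s) t with h | h <;> omega

/-- Induction on `ℓ w`, writing `w = v * σ t` with `t` the last letter of a reduced word: the
rank-two relation between `s` and `t` expresses `w • α s` through `v` or `v * σ s`, both shorter. -/
theorem smul_simpleRoot_mem_positiveCone {w : S.weylGroup} {s : Fin n}
    (h : S.length w < S.length (w * S.simple s)) : w • S.α s ∈ S.positiveCone := by
  induction hm : S.length w using Nat.strong_induction_on generalizing w s with
  | _ m ih =>
  have ih' : ∀ u : S.weylGroup, S.length u < S.length w → ∀ s,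
      S.length u < S.length (u * S.simple s) → u • S.α s ∈ S.positiveCone :=
    fun u hu s hs => ih _ (hm ▸ hu) hs rfl
  obtain ⟨ω, hlen, rfl⟩ := S.exists_reduced_word w
  rcases ω.eq_nil_or_concat with rfl | ⟨ω, t, rfl⟩
  · simpa using S.simpleRoot_mem_positiveCone s
  have hw : S.wordProd (ω.concat t) = S.wordProd ω * S.simple t := by simp
  rw [hw] at h ih' hlen ⊢
  have ht : S.length (S.wordProd ω) < S.length (S.wordProd ω * S.simple t) := by
    have := S.length_wordProd_le ω
    simp only [List.concat_eq_append, List.length_append, List.length_singleton] at hlen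
    omega
  set v := S.wordProd ω
  have hst : s ≠ t := by
    rintro rfl
    rw [mul_assoc, simple_mul_self, mul_one] at h
    omega
  rcases S.inner_of_ne s t hst with h0 | h1
  · rw [mul_smul, S.simple_smul_simpleRoot_of_inner_eq_zero h0]
    exact ih' v ht s (S.length_lt_mul_simple_of_inner_eq_zero h0 ht h)
  · rw [mul_smul, S.simple_smul_simpleRoot_of_inner_eq_neg_one h1, smul_add]
    rcases S.length_mul_simple v s with hs | hs
    · exact add_mem (ih' v ht s (by omega)) (ih' v ht t ht)
    · have hts : ⟪S.α t, S.α s⟫ = -1 := by rwa [real_inner_comm]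
      have hv : v • (S.α s + S.α t) = (v * S.simple s) • S.α t := by
        rw [mul_smul, S.simple_smul_simpleRoot_of_inner_eq_neg_one hts, add_comm]
      rw [← smul_add, hv]
      exact ih' _ (by omega) t (S.length_lt_mul_simple_of_inner_eq_neg_one h1 ht h (by omega))

lemma neg_smul_simpleRoot_mem_positiveCone {w : S.weylGroup} {s : Fin n}
    (h : S.length (w * S.simple s) < S.length w) : -(w • S.α s) ∈ S.positiveCone := by
  have hpos := S.smul_simpleRoot_mem_positiveCone (w := w * S.simple s) (s := s)
    (by rwa [mul_assoc, simple_mul_self, mul_one])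
  rwa [mul_smul, simple_smul_self, smul_neg] at hpos

lemma length_mul_simple_of_smul_mem_positiveCone {w : S.weylGroup} {s : Fin n}
    (h : w • S.α s ∈ S.positiveCone) : S.length (w * S.simple s) = S.length w + 1 := by
  refine (S.length_mul_simple w s).resolve_right fun hlt => ?_
  have := S.eq_zero_of_mem_positiveCone_of_neg_mem h
    (S.neg_smul_simpleRoot_mem_positiveCone (by omega))
  exact S.ne_zero_of_mem_roots (S.smul_mem_roots w (S.simpleRoot_mem_roots s)) this

lemma mem_positiveCone_or_neg_mem {γ : E} (hγ : γ ∈ S.roots) :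
    γ ∈ S.positiveCone ∨ -γ ∈ S.positiveCone := by
  obtain ⟨w, s, rfl⟩ := S.mem_roots.mp hγ
  rcases S.length_mul_simple w s with h | h
  · exact .inl (S.smul_simpleRoot_mem_positiveCone (by omega))
  · exact .inr (S.neg_smul_simpleRoot_mem_positiveCone (by omega))

lemma simple_smul_mem_positiveCone {θ : E} {k : Fin n} (hθ : θ ∈ S.roots)
    (hθpos : θ ∈ S.positiveCone) (hθk : θ ≠ S.α k) : S.simple k • θ ∈ S.positiveCone := by
  refine (S.mem_positiveCone_or_neg_mem (S.smul_mem_roots _ hθ)).resolve_right fun hneg => hθk ?_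
  rw [simple_smul, neg_sub] at hneg
  exact S.eq_simpleRoot_of_smul_sub_mem_positiveCone hθ hθpos hneg

lemma exists_shorter_word_of_wordProd_smul_not_mem {δ : E} (hδ : δ ∈ S.roots)
    (hδpos : δ ∈ S.positiveCone) {R : S.weylGroup} (hR : ∀ x, R • x = x - ⟪δ, x⟫ • δ)
    (ω : List (Fin n)) (hω : S.wordProd ω • δ ∉ S.positiveCone) :
    ∃ ω' : List (Fin n), ω'.length < ω.length ∧ S.wordProd ω' = S.wordProd ω * R := by
  induction ω with
  | nil => exact absurd (by simpa using hδpos) hω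
  | cons i ω ih =>
    rw [wordProd_cons, mul_smul] at hω
    by_cases hpos : S.wordProd ω • δ ∈ S.positiveCone
    -- `σ i` is the letter turning `δ` negative, so `wordProd ω • δ = α i` and `σ i` cancels `R`.
    · have hαi : S.wordProd ω • δ = S.α i := by
        by_contra hne
        exact hω (S.simple_smul_mem_positiveCone (S.smul_mem_roots _ hδ) hpos hne)
      refine ⟨ω, by simp, ?_⟩
      rw [wordProd_cons, mul_assoc, ← S.simple_mul_eq_mul_of_smul_eq hR hαi, ← mul_assoc,
        simple_mul_self, one_mul]
    · obtain ⟨ω', hlen, hω'⟩ := ih hpos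
      exact ⟨i :: ω', by simpa using hlen, by rw [wordProd_cons, wordProd_cons, hω', mul_assoc]⟩

lemma length_mul_lt_of_smul_not_mem {δ : E} (hδ : δ ∈ S.roots) (hδpos : δ ∈ S.positiveCone)
    {R : S.weylGroup} (hR : ∀ x, R • x = x - ⟪δ, x⟫ • δ) {w : S.weylGroup}
    (hw : w • δ ∉ S.positiveCone) : S.length (w * R) < S.length w := by
  obtain ⟨ω, hlen, rfl⟩ := S.exists_reduced_word w
  obtain ⟨ω', hlt, hω'⟩ := S.exists_shorter_word_of_wordProd_smul_not_mem hδ hδpos hR ω hw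
  have := S.length_wordProd_le ω'
  rw [hω'] at this
  omega

lemma inner_simpleRoot_eq_zero_of_dominant {x γ : E} (hx : ∀ k, 0 ≤ ⟪S.α k, x⟫)
    (hγ : γ ∈ S.roots) (hγpos : γ ∈ S.positiveCone) (hγx : ⟪γ, x⟫ = 0) {k : Fin n}
    (hk : 0 < ⟪S.α k, γ⟫) (hγk : γ ≠ S.α k) : ⟪S.α k, x⟫ = 0 := by
  have h := S.inner_nonneg_of_mem_positiveCone hx (S.simple_smul_mem_positiveCone hγ hγpos hγk)
  rw [simple_smul, inner_sub_left, real_inner_smul_left, hγx] at h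
  nlinarith [hx k]

section Minimal

variable {β : E} {w : S.weylGroup}

lemma smul_mem_positiveCone_of_minimal
    (hw : S.IsMinimalFor β w) {δ : E} (hδ : δ ∈ S.roots)
    (hδpos : δ ∈ S.positiveCone) (hδβ : ⟪δ, β⟫ = 0) : w • δ ∈ S.positiveCone := by
  by_contra hneg
  obtain ⟨R, hR⟩ := S.exists_reflection_of_mem_roots hδ
  have hRβ : (w * R) • β = w • β := by rw [mul_smul, hR, hδβ, zero_smul, sub_zero]
  have := S.length_mul_lt_of_smul_not_mem hδ hδpos hR hneg
  have := hw _ hRβ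
  omega

lemma inv_smul_simpleRoot_mem_positiveCone_of_minimal
    (hw : S.IsMinimalFor β w) {k : Fin n}
    (hk : ⟪S.α k, w • β⟫ = 0) : w⁻¹ • S.α k ∈ S.positiveCone := by
  have hroot := S.smul_mem_roots w⁻¹ (S.simpleRoot_mem_roots k)
  refine (S.mem_positiveCone_or_neg_mem hroot).resolve_right fun hneg => ?_
  have hβ : ⟪-(w⁻¹ • S.α k), β⟫ = 0 := by
    rw [inner_neg_left, S.inner_smul_left_eq_inner_inv_smul, inv_inv, hk, neg_zero]
  have hk' := S.smul_mem_positiveCone_of_minimal hw (S.neg_mem_roots hroot) hneg hβ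
  rw [smul_neg, smul_inv_smul] at hk'
  exact S.ne_zero_of_mem_roots (S.simpleRoot_mem_roots k)
    (S.eq_zero_of_mem_positiveCone_of_neg_mem (S.simpleRoot_mem_positiveCone k) hk')

theorem exists_smul_simpleRoot_eq_of_minimal
    (hw : S.IsMinimalFor β w)
    (hdom : ∀ k, 0 ≤ ⟪S.α k, w • β⟫) {i : Fin n} (hi : ⟪S.α i, β⟫ = 0) :
    ∃ j, w • S.α i = S.α j := by
  set γ := w • S.α i with hγdef
  have hγ : γ ∈ S.roots := S.smul_mem_roots w (S.simpleRoot_mem_roots i)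
  have hγpos : γ ∈ S.positiveCone := S.smul_mem_positiveCone_of_minimal hw
    (S.simpleRoot_mem_roots i) (S.simpleRoot_mem_positiveCone i) hi
  by_contra! hne
  obtain ⟨k, hk⟩ := S.exists_inner_pos_of_mem_positiveCone hγpos
    (by rw [S.inner_self_of_mem_roots hγ]; norm_num)
  have hkβ : ⟪S.α k, w • β⟫ = 0 := S.inner_simpleRoot_eq_zero_of_dominant hdom hγ hγpos
    (by rw [hγdef, S.inner_smul_smul, hi]) hk (hne k)
  set δ := w⁻¹ • S.α k with hδdef
  have hδ : δ ∈ S.roots := S.smul_mem_roots _ (S.simpleRoot_mem_roots k)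
  have hδi : ⟪S.α i, δ⟫ = ⟪S.α k, γ⟫ := by
    rw [← S.inner_smul_smul w, hδdef, smul_inv_smul, real_inner_comm]
  have hδne : δ ≠ S.α i := fun h => hne k (by rw [hγdef, ← h, hδdef, smul_inv_smul])
  have hδβ : ⟪S.simple i • δ, β⟫ = 0 := by
    rw [simple_smul, inner_sub_left, real_inner_smul_left, hi, mul_zero, sub_zero,
      S.inner_smul_left_eq_inner_inv_smul, inv_inv, hkβ]
  have hwδ := S.smul_mem_positiveCone_of_minimal hw (S.smul_mem_roots _ hδ)
    (S.simple_smul_mem_positiveCone hδ (S.inv_smul_simpleRoot_mem_positiveCone_of_minimal hw hkβ)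
      hδne) hδβ
  rw [simple_smul, smul_sub, hδdef, smul_inv_smul, smul_comm, ← hδdef, hδi, ← hγdef] at hwδ
  have hscaled := S.positiveCone.smul_mem (inv_nonneg.mpr hk.le) hwδ
  rw [smul_sub, smul_smul, inv_mul_cancel₀ hk.ne', one_smul] at hscaled
  exact hne k (S.eq_simpleRoot_of_smul_sub_mem_positiveCone hγ hγpos hscaled)

end Minimal

lemma conj_eq_of_smul_simpleRoot_eq {G : Type*} [Group G] (g : Fin n → G) (ψ : S.weylGroup → G)
    (hψ : S.IsCanonicalSection g ψ)
    {w : S.weylGroup} {i j : Fin n} (h : w • S.α i = S.α j) :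
    (ψ w⁻¹)⁻¹ * g i * ψ w⁻¹ = g j := by
  have hji : w⁻¹ • S.α j = S.α i := by rw [← h, inv_smul_smul]
  exact S.conj_eq_of_simple_mul_eq g ψ hψ (S.simple_mul_eq_mul_of_smul_eq (S.simple_smul j) hji)
    (S.length_mul_simple_of_smul_mem_positiveCone (hji ▸ S.simpleRoot_mem_positiveCone i))

end FiniteDimensional

end SimplyLacedBase

theorem artin_h_beta_i_in_C_general (n d : ℕ)
    (α : Fin n → EuclideanSpace ℝ (Fin d))
    (hind : LinearIndependent ℝ α)
    (hnorm : ∀ i, ⟪α i, α i⟫ = 2)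
    (hcartan : ∀ i j, i ≠ j → ⟪α i, α j⟫ = 0 ∨ ⟪α i, α j⟫ = -1)
    (r : Fin n → (EuclideanSpace ℝ (Fin d) ≃ₗ[ℝ] EuclideanSpace ℝ (Fin d)))
    (hr : ∀ i v, r i v = v - ⟪α i, v⟫ • α i)
    (W : Subgroup (EuclideanSpace ℝ (Fin d) ≃ₗ[ℝ] EuclideanSpace ℝ (Fin d)))
    (hW : W = Subgroup.closure (Set.range r))
    (Φ : Set (EuclideanSpace ℝ (Fin d)))
    (hΦ : Φ = {β | ∃ w ∈ W, ∃ i, w (α i) = β})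
    (ℓ : W → ℕ)
    (hℓ : ∀ w : W, ℓ w = sInf {k | ∃ ω : List (Fin n),
      ω.length = k ∧ w.1 = (ω.map r).prod})
    (adj : Fin n → Fin n → Prop)
    (ψ : W → Artin n adj)
    (hψ : ∀ (w : W) (ω : List (Fin n)), w.1 = (ω.map r).prod → ω.length = ℓ w →
      ψ w = (ω.map (sgen n adj)).prod)
    (α₀ : EuclideanSpace ℝ (Fin d)) (c₀ : Fin n → ℕ)
    (hα₀Φ : α₀ ∈ Φ) (hα₀c : α₀ = ∑ k, (c₀ k : ℝ) • α k)
    (hhighest : ∀ β ∈ Φ, ∀ c : Fin n → ℕ, β = ∑ k, (c k : ℝ) • α k →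
      ∀ k, c k ≤ c₀ k)
    (β : EuclideanSpace ℝ (Fin d)) (c : Fin n → ℕ)
    (i : Fin n) (horth : ⟪α i, β⟫ = 0)
    (w : W) (hwβ : w.1 β = α₀)
    (hwmin : ∀ v : W, v.1 β = α₀ → ℓ w ≤ ℓ v) :
    ∃ j : Fin n, ⟪α j, α₀⟫ = 0 ∧
      (ψ w⁻¹)⁻¹ * sgen n adj i * ψ w⁻¹ = sgen n adj j := by
  obtain ⟨S, rfl⟩ : ∃ S : SimplyLacedBase n (EuclideanSpace ℝ (Fin d)), S.α = α :=
    ⟨⟨α, hind, hnorm, hcartan⟩, rfl⟩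
  obtain rfl : r = S.reflection :=
    funext fun k => LinearEquiv.ext fun v => (hr k v).trans (S.reflection_apply k v).symm
  obtain rfl : W = S.weylGroup := hW
  obtain rfl : Φ = S.roots := hΦ
  obtain rfl : ℓ = S.length := funext hℓ
  obtain rfl : α₀ = w.1 β := hwβ.symm
  obtain ⟨j, hj⟩ := S.exists_smul_simpleRoot_eq_of_minimal hwmin
    (S.inner_simpleRoot_nonneg_of_isHighest hα₀Φ hα₀c hhighest) horth
  refine ⟨j, ?_, S.conj_eq_of_smul_simpleRoot_eq (sgen n adj) ψ hψ hj⟩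
  rw [← hj]
  exact (S.inner_smul_smul w _ _).trans horth

/-- Let `M` be a connected simply laced spherical diagram with highest root `α₀` and
`C` the set of nodes orthogonal to `α₀`. For a positive root `β` and a node `i` with
`(α i, β) = 0`, letting `w` be the shortest element of `W` with `w β = α₀` and
`d_β = ψ (w⁻¹)`, the element `h_{β,i} = d_β⁻¹ s_i d_β` of the Artin group equals `s_j`
for some node `j ∈ C`. -/
theorem artin_h_beta_i_in_C (n d : ℕ)
    (α : Fin n → EuclideanSpace ℝ (Fin d))
    (hind : LinearIndependent ℝ α)
    (hnorm : ∀ i, ⟪α i, α i⟫ = 2)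
    (hcartan : ∀ i j, i ≠ j → ⟪α i, α j⟫ = 0 ∨ ⟪α i, α j⟫ = -1)
    (hconn : ∀ i j : Fin n, ∃ p : List (Fin n), p ≠ [] ∧ p.head? = some i ∧
      p.getLast? = some j ∧ p.Chain' (fun a b => ⟪α a, α b⟫ = -1))
    (r : Fin n → (EuclideanSpace ℝ (Fin d) ≃ₗ[ℝ] EuclideanSpace ℝ (Fin d)))
    (hr : ∀ i v, r i v = v - ⟪α i, v⟫ • α i)
    (W : Subgroup (EuclideanSpace ℝ (Fin d) ≃ₗ[ℝ] EuclideanSpace ℝ (Fin d)))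
    (hW : W = Subgroup.closure (Set.range r))
    (hfin : Finite W)
    (Φ : Set (EuclideanSpace ℝ (Fin d)))
    (hΦ : Φ = {β | ∃ w ∈ W, ∃ i, w (α i) = β})
    (ℓ : W → ℕ)
    (hℓ : ∀ w : W, ℓ w = sInf {k | ∃ ω : List (Fin n),
      ω.length = k ∧ w.1 = (ω.map r).prod})
    (adj : Fin n → Fin n → Prop)
    (hadj : ∀ i j, adj i j ↔ ⟪α i, α j⟫ = -1)
    (ψ : W → Artin n adj)
    (hψ : ∀ (w : W) (ω : List (Fin n)), w.1 = (ω.map r).prod → ω.length = ℓ w →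
      ψ w = (ω.map (sgen n adj)).prod)
    (α₀ : EuclideanSpace ℝ (Fin d)) (c₀ : Fin n → ℕ)
    (hα₀Φ : α₀ ∈ Φ) (hα₀c : α₀ = ∑ k, (c₀ k : ℝ) • α k)
    (hhighest : ∀ β ∈ Φ, ∀ c : Fin n → ℕ, β = ∑ k, (c k : ℝ) • α k →
      ∀ k, c k ≤ c₀ k)
    (β : EuclideanSpace ℝ (Fin d)) (c : Fin n → ℕ)
    (hβΦ : β ∈ Φ) (hβc : β = ∑ k, (c k : ℝ) • α k)
    (i : Fin n) (horth : ⟪α i, β⟫ = 0)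
    (w : W) (hwβ : w.1 β = α₀)
    (hwmin : ∀ v : W, v.1 β = α₀ → ℓ w ≤ ℓ v) :
    ∃ j : Fin n, ⟪α j, α₀⟫ = 0 ∧
      (ψ w⁻¹)⁻¹ * sgen n adj i * ψ w⁻¹ = sgen n adj j :=
  artin_h_beta_i_in_C_general n d α hind hnorm hcartan r hr W hW Φ hΦ ℓ hℓ adj ψ hψ α₀ c₀ hα₀Φ hα₀c
    hhighest β c i horth w hwβ hwmin
end
end
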